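/- arXiv:0910.2863 — 9 statements merged into one kernel-verified Lean document; each statement's English description precedes it below -/
import Mathlib

section
/- Let ℓ₀ ∈ ℝ and let R, K_ℓ, K_R : [ℓ₀,∞) → ℝ be smooth with R > 0, H = 2R'/R. Assume the decay conditions |H − 2/ℓ| = O(ℓ⁻²), |K_ℓ| = O(ℓ⁻²), and |trK| = O(ℓ⁻³) as ℓ → ∞, where trK = K_ℓ + 2K_R. Then any C¹ solution k on [ℓ₀,∞) of the ODE ∂_ℓ k = −K_ℓ k² − H k + trK that is uniformly bounded satisfies k(ℓ) → 0 as ℓ → ∞; in fact |k(ℓ)| = O(ℓ⁻¹). -/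
/-!
Since `(log R - log ℓ)' = (H - 2/ℓ)/2 = O(ℓ⁻²)` is integrable, `log (R/ℓ)` stays bounded, so
`R` is comparable to `ℓ`. Multiplying the equation by `R²` absorbs the linear term:
`(R² k)' = R² (trK - K_ℓ k²)`, which is `O(1)` for bounded `k`. Hence `R² k = O(ℓ)`, and
`k = O(ℓ / R²) = O(ℓ⁻¹)`.
-/

open Filter Asymptotics Set Topology

/-- Mean curvature `H = 2 R' / R` of the spherically symmetric spheres. -/
noncomputable def Hf (R : ℝ → ℝ) : ℝ → ℝ := fun ℓ => 2 * deriv R ℓ / R ℓ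

/-- `trK = K_ℓ + 2 K_R`. -/
def trKf (Kl KR : ℝ → ℝ) : ℝ → ℝ := fun ℓ => Kl ℓ + 2 * KR ℓ

lemma abs_sub_le_sub_of_abs_deriv_le {f f' g g' : ℝ → ℝ} {a : ℝ}
    (hf : ∀ x ≥ a, HasDerivAt f (f' x) x) (hg : ∀ x ≥ a, HasDerivAt g (g' x) x)
    (hle : ∀ x ≥ a, |f' x| ≤ g' x) {x : ℝ} (hx : a ≤ x) :
    |f x - f a| ≤ g x - g a := by
  have hnorm := image_norm_le_of_norm_deriv_right_le_deriv_boundary'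
    (f := fun y => f y - f a) (B := fun y => g y - g a) (a := a) (b := x)
    (fun y hy => ((hf y hy.1).sub_const (f a)).continuousAt.continuousWithinAt)
    (fun y hy => ((hf y hy.1).sub_const (f a)).hasDerivWithinAt) (by simp)
    (fun y hy => ((hg y hy.1).sub_const (g a)).continuousAt.continuousWithinAt)
    (fun y hy => ((hg y hy.1).sub_const (g a)).hasDerivWithinAt)
    (fun y hy => hle y hy.1) ⟨hx, le_rfl⟩
  simpa only [Real.norm_eq_abs] using hnorm

lemma isBigO_one_of_hasDerivAt_isBigO_inv_sq {f f' : ℝ → ℝ}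
    (hf : ∀ᶠ x in atTop, HasDerivAt f (f' x) x) (hf' : f' =O[atTop] fun x => (x ^ 2)⁻¹) :
    f =O[atTop] fun _ => (1 : ℝ) := by
  obtain ⟨C, hC⟩ := hf'.bound
  obtain ⟨a, ha⟩ := eventually_atTop.1 (hf.and (hC.and (eventually_gt_atTop 0)))
  have ha0 : 0 < a := (ha a le_rfl).2.2
  have hbound : ∀ x ≥ a, |f' x| ≤ |C| * (x ^ 2)⁻¹ := fun x hx => by
    have hCx := (ha x hx).2.1
    rw [Real.norm_eq_abs, Real.norm_eq_abs, abs_of_nonneg (a := (x ^ 2)⁻¹) (by positivity)] at hCx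
    exact hCx.trans (mul_le_mul_of_nonneg_right (le_abs_self C) (by positivity))
  have hg : ∀ x ≥ a, HasDerivAt (fun y => -|C| * y⁻¹) (|C| * (x ^ 2)⁻¹) x := fun x hx => by
    simpa using (hasDerivAt_inv (ha0.trans_le hx).ne').const_mul (-|C|)
  refine .of_bound (|f a| + |C| * a⁻¹) ?_
  filter_upwards [eventually_ge_atTop a] with x hx
  have hsub := abs_sub_le_sub_of_abs_deriv_le (fun x hx => (ha x hx).1) hg hbound hx
  have hCx : 0 ≤ |C| * x⁻¹ := by have := ha0.trans_le hx; positivity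
  rw [norm_one, mul_one, Real.norm_eq_abs]
  linarith [abs_sub_abs_le_abs_sub (f x) (f a)]

lemma isBigO_id_of_hasDerivAt_isBigO_one {f f' : ℝ → ℝ}
    (hf : ∀ᶠ x in atTop, HasDerivAt f (f' x) x) (hf' : f' =O[atTop] fun _ => (1 : ℝ)) :
    f =O[atTop] fun x => x := by
  obtain ⟨C, hC⟩ := hf'.bound
  obtain ⟨a, ha⟩ := eventually_atTop.1 (hf.and (hC.and (eventually_ge_atTop 1)))
  have ha1 : 1 ≤ a := (ha a le_rfl).2.2
  have hbound : ∀ x ≥ a, |f' x| ≤ |C| := fun x hx => by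
    simpa [Real.norm_eq_abs] using (ha x hx).2.1.trans (by simpa using le_abs_self C)
  have hg : ∀ x ≥ a, HasDerivAt (fun y => |C| * y) |C| x := fun x _ => by
    simpa using (hasDerivAt_id x).const_mul |C|
  refine .of_bound (|f a| + |C|) ?_
  filter_upwards [eventually_ge_atTop a] with x hx
  have hsub := abs_sub_le_sub_of_abs_deriv_le (fun x hx => (ha x hx).1) hg hbound hx
  have hx1 : 1 ≤ x := ha1.trans hx
  rw [Real.norm_eq_abs, Real.norm_eq_abs, abs_of_pos (a := x) (by linarith)]
  nlinarith [abs_sub_abs_le_abs_sub (f x) (f a), abs_nonneg (f a), abs_nonneg C]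

lemma isTheta_id_of_isBigO_Hf_sub {R : ℝ → ℝ}
    (hR : ∀ᶠ x in atTop, HasDerivAt R (deriv R x) x) (hRpos : ∀ᶠ x in atTop, 0 < R x)
    (hH : (fun ℓ => Hf R ℓ - 2 / ℓ) =O[atTop] fun ℓ => (ℓ ^ 2)⁻¹) :
    R =Θ[atTop] fun x => x := by
  set φ : ℝ → ℝ := fun x => Real.log (R x) - Real.log x
  have hφ : ∀ᶠ x in atTop, HasDerivAt φ ((Hf R x - 2 / x) / 2) x := by
    filter_upwards [hR, hRpos, eventually_gt_atTop 0] with x hRx hRx0 hx0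
    refine ((hRx.log hRx0.ne').fun_sub (Real.hasDerivAt_log hx0.ne')).congr_deriv ?_
    simp only [Hf]
    field_simp
  have hφ_bdd : (fun x => Real.exp (φ x)) =Θ[atTop] fun _ => (1 : ℝ) :=
    Real.isTheta_exp_comp_one.2 <| (isBigO_one_iff ℝ).1 <|
      isBigO_one_of_hasDerivAt_isBigO_inv_sq hφ <| by
        simpa only [div_eq_mul_inv, mul_comm] using hH.const_mul_left 2⁻¹
  have hReq : R =ᶠ[atTop] fun x => x * Real.exp (φ x) := by
    filter_upwards [hRpos, eventually_gt_atTop 0] with x hRx hx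
    simp only [φ, Real.exp_sub, Real.exp_log hRx, Real.exp_log hx]
    field_simp
  simpa using hReq.trans_isTheta ((isTheta_refl (fun x : ℝ => x) atTop).mul hφ_bdd)

lemma hasDerivAt_sq_mul_of_jang {R Kl KR k : ℝ → ℝ} {x : ℝ}
    (hR : HasDerivAt R (deriv R x) x) (hRx : R x ≠ 0)
    (hk : HasDerivAt k (-(Kl x) * k x ^ 2 - Hf R x * k x + trKf Kl KR x) x) :
    HasDerivAt (fun t => R t ^ 2 * k t) (R x ^ 2 * (trKf Kl KR x - Kl x * k x ^ 2)) x := by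
  refine ((hR.fun_pow 2).fun_mul hk).congr_deriv ?_
  simp only [Hf]
  field_simp
  ring

lemma isBigO_trKf_sub_mul_sq {Kl KR k : ℝ → ℝ}
    (hKl : Kl =O[atTop] fun ℓ => (ℓ ^ 2)⁻¹) (htrK : trKf Kl KR =O[atTop] fun ℓ => (ℓ ^ 3)⁻¹)
    (hk : k =O[atTop] fun _ => (1 : ℝ)) :
    (fun x => trKf Kl KR x - Kl x * k x ^ 2) =O[atTop] fun x => (x ^ 2)⁻¹ := by
  have hcube : (fun x : ℝ => (x ^ 3)⁻¹) =O[atTop] fun x => (x ^ 2)⁻¹ :=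
    (isLittleO_pow_pow_atTop_of_lt (by norm_num : 2 < 3)).isBigO.inv_rev <|
      .of_forall fun x hx => by simp_all
  exact (htrK.trans hcube).sub <| by simpa using hKl.mul (hk.pow 2)

theorem jang_bounded_solution_decay_general (ℓ₀ : ℝ) (R Kl KR k : ℝ → ℝ)
    (hR : ContDiffOn ℝ (⊤ : ℕ∞) R (Set.Ici ℓ₀))
    (hRpos : ∀ ℓ ∈ Set.Ici ℓ₀, 0 < R ℓ)
    (hHdec : (fun ℓ => Hf R ℓ - 2 / ℓ) =O[atTop] fun ℓ => (ℓ ^ 2)⁻¹)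
    (hKldec : Kl =O[atTop] fun ℓ => (ℓ ^ 2)⁻¹)
    (htrKdec : trKf Kl KR =O[atTop] fun ℓ => (ℓ ^ 3)⁻¹)
    (hode : ∀ ℓ ∈ Set.Ici ℓ₀,
      HasDerivAt k (-(Kl ℓ) * k ℓ ^ 2 - Hf R ℓ * k ℓ + trKf Kl KR ℓ) ℓ)
    (hbdd : ∃ M : ℝ, ∀ ℓ ∈ Set.Ici ℓ₀, |k ℓ| ≤ M) :
    Tendsto k atTop (nhds 0) ∧ k =O[atTop] fun ℓ => ℓ⁻¹ := by
  have hRd : ∀ᶠ x in atTop, HasDerivAt R (deriv R x) x := by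
    filter_upwards [eventually_gt_atTop ℓ₀] with x hx
    exact ((hR.contDiffAt (Ici_mem_nhds hx)).differentiableAt (by simp)).hasDerivAt
  have hRpos' : ∀ᶠ x in atTop, 0 < R x := eventually_atTop.2 ⟨ℓ₀, hRpos⟩
  have hk : k =O[atTop] fun _ => (1 : ℝ) := by
    obtain ⟨M, hM⟩ := hbdd
    exact .of_bound M (eventually_atTop.2 ⟨ℓ₀, fun x hx => by simpa using hM x hx⟩)
  have hR_lin := isTheta_id_of_isBigO_Hf_sub hRd hRpos' hHdec
  have hsource := isBigO_trKf_sub_mul_sq hKldec htrKdec hk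
  have hF : (fun x => R x ^ 2 * k x) =O[atTop] fun x => x := by
    refine isBigO_id_of_hasDerivAt_isBigO_one
      (f' := fun x => R x ^ 2 * (trKf Kl KR x - Kl x * k x ^ 2)) ?_ ?_
    · filter_upwards [hRd, hRpos', eventually_ge_atTop ℓ₀] with x hRx hRx0 hx
      exact hasDerivAt_sq_mul_of_jang hRx hRx0.ne' (hode x hx)
    · refine ((hR_lin.pow 2).isBigO.mul hsource).trans_eventuallyEq ?_
      filter_upwards [eventually_ne_atTop 0] with x hx
      field_simp
  have hdecay : k =O[atTop] fun x => x⁻¹ := by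
    refine (hF.mul (hR_lin.pow 2).inv.isBigO).congr' ?_ ?_
    · filter_upwards [hRpos'] with x hx
      field_simp
    · filter_upwards with x
      field_simp
  exact ⟨hdecay.trans_tendsto tendsto_inv_atTop_zero, hdecay⟩

/-- Any uniformly bounded `C¹` solution of the reduced Jang equation
`∂_ℓ k = −K_ℓ k² − H k + trK` on `[ℓ₀,∞)`, under the stated decay conditions,
tends to `0` at infinity, and in fact `|k(ℓ)| = O(ℓ⁻¹)`. -/
theorem jang_bounded_solution_decay (ℓ₀ : ℝ) (R Kl KR k : ℝ → ℝ)
    (hR : ContDiffOn ℝ (⊤ : ℕ∞) R (Set.Ici ℓ₀))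
    (hKl : ContDiffOn ℝ (⊤ : ℕ∞) Kl (Set.Ici ℓ₀))
    (hKR : ContDiffOn ℝ (⊤ : ℕ∞) KR (Set.Ici ℓ₀))
    (hRpos : ∀ ℓ ∈ Set.Ici ℓ₀, 0 < R ℓ)
    (hHdec : (fun ℓ => Hf R ℓ - 2 / ℓ) =O[atTop] fun ℓ => (ℓ ^ 2)⁻¹)
    (hKldec : Kl =O[atTop] fun ℓ => (ℓ ^ 2)⁻¹)
    (htrKdec : trKf Kl KR =O[atTop] fun ℓ => (ℓ ^ 3)⁻¹)
    (hode : ∀ ℓ ∈ Set.Ici ℓ₀,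
      HasDerivAt k (-(Kl ℓ) * k ℓ ^ 2 - Hf R ℓ * k ℓ + trKf Kl KR ℓ) ℓ)
    (hbdd : ∃ M : ℝ, ∀ ℓ ∈ Set.Ici ℓ₀, |k ℓ| ≤ M) :
    Tendsto k atTop (nhds 0) ∧ k =O[atTop] fun ℓ => ℓ⁻¹ :=
  jang_bounded_solution_decay_general ℓ₀ R Kl KR k hR hRpos hHdec hKldec htrKdec hode hbdd
end

section
/- Let R, K_ℓ, K_R be smooth with R > 0 near a point ℓ*, set H = 2R'/R, θ⁺ = 2K_R + H, trK = K_ℓ + 2K_R, and suppose there is j ≥ 1 with θ⁺(ℓ*) = ∂_ℓθ⁺(ℓ*) = ⋯ = ∂_ℓ^{j−1}θ⁺(ℓ*) = 0 and ∂_ℓ^{j}θ⁺(ℓ*) > 0. If k is a smooth solution of ∂_ℓ k = −K_ℓ k² − H k + trK near ℓ* with k(ℓ*) = −1, then ∂_ℓ k(ℓ*) = ⋯ = ∂_ℓ^{j} k(ℓ*) = 0 and ∂_ℓ^{j+1} k(ℓ*) > 0; consequently there is ε > 0 with k(ℓ) > −1 for ℓ ∈ (ℓ*, ℓ* + ε).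 -/
/-!
Put `w = 1 + k`. The reduced Jang equation in the form `k' = K_ℓ (1 - k²) - H (1 + k) + θ⁺`
becomes the linear equation `w' = a w + θ⁺` with `a = K_ℓ (1 - k) - H`. Differentiating it
`n` times at `ℓ*` and using the Leibniz rule, `w⁽ⁿ⁺¹⁾(ℓ*) = θ⁺⁽ⁿ⁾(ℓ*)` as soon as
`w, …, w⁽ⁿ⁾` vanish at `ℓ*`; starting from `w(ℓ*) = 0` this gives `w⁽ⁱ⁾(ℓ*) = 0` for `i ≤ j`
and `w⁽ʲ⁺¹⁾(ℓ*) = θ⁺⁽ʲ⁾(ℓ*) > 0`. A function whose first nonvanishing derivative at a point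
is positive is positive just to the right of it.
-/

open Filter Asymptotics Set Topology

/-- Outer expansion `θ⁺ = 2 K_R + H`. -/
noncomputable def thetaPlus (R KR : ℝ → ℝ) : ℝ → ℝ := fun ℓ => 2 * KR ℓ + Hf R ℓ

section LinearODE

variable {𝕜 𝔸 : Type*} [NontriviallyNormedField 𝕜] [NormedRing 𝔸] [NormedAlgebra 𝕜 𝔸]
  {a w b : 𝕜 → 𝔸} {x : 𝕜}

theorem iteratedDeriv_succ_eq_of_deriv_eq_mul_add {n : ℕ} (ha : ContDiffAt 𝕜 n a x)
    (hw : ContDiffAt 𝕜 n w x) (hb : ContDiffAt 𝕜 n b x)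
    (hode : deriv w =ᶠ[𝓝 x] fun y => a y * w y + b y)
    (hlow : ∀ i ≤ n, iteratedDeriv i w x = 0) :
    iteratedDeriv (n + 1) w x = iteratedDeriv n b x := by
  rw [iteratedDeriv_succ', hode.iteratedDeriv_eq, iteratedDeriv_fun_add (ha.mul hw) hb,
    iteratedDeriv_fun_mul ha hw,
    Finset.sum_eq_zero fun i _ => by rw [hlow (n - i) (Nat.sub_le n i), mul_zero], zero_add]

theorem iteratedDeriv_eq_zero_of_deriv_eq_mul_add {n : ℕ} (ha : ContDiffAt 𝕜 n a x)
    (hw : ContDiffAt 𝕜 n w x) (hb : ContDiffAt 𝕜 n b x)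
    (hode : deriv w =ᶠ[𝓝 x] fun y => a y * w y + b y) (hw₀ : w x = 0)
    (hb_low : ∀ i < n, iteratedDeriv i b x = 0) :
    ∀ i ≤ n, iteratedDeriv i w x = 0 := by
  intro i hi
  induction i using Nat.strong_induction_on with
  | _ i ih =>
    cases i with
    | zero => simpa using hw₀
    | succ m =>
      have hm : (m : WithTop ℕ∞) ≤ n := by exact_mod_cast (Nat.le_succ m).trans hi
      rw [iteratedDeriv_succ_eq_of_deriv_eq_mul_add (ha.of_le hm) (hw.of_le hm) (hb.of_le hm)
        hode fun p hp => ih p (Nat.lt_succ_of_le hp) (by omega)]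
      exact hb_low m hi

end LinearODE

theorem eventually_pos_nhdsGT_of_deriv {f : ℝ → ℝ} {x : ℝ} (hf : ContinuousAt f x)
    (hfx : f x = 0) (hd : ∀ᶠ y in 𝓝[>] x, 0 < deriv f y) :
    ∀ᶠ y in 𝓝[>] x, 0 < f y := by
  obtain ⟨u, hxu, hu⟩ := mem_nhdsGT_iff_exists_Ioo_subset.mp hd
  have hdiff : ∀ y ∈ Ioo x u, DifferentiableAt ℝ f y := fun y hy =>
    differentiableAt_of_deriv_ne_zero (hu hy).ne'
  have hcont : ContinuousOn f (Ico x u) := by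
    intro y ⟨hxy, hyu⟩
    rcases hxy.eq_or_lt with rfl | hxy
    · exact hf.continuousWithinAt
    · exact (hdiff y ⟨hxy, hyu⟩).continuousAt.continuousWithinAt
  have hmono : StrictMonoOn f (Ico x u) :=
    strictMonoOn_of_deriv_pos (convex_Ico x u) hcont fun y hy => hu (by simpa using hy)
  filter_upwards [Ioo_mem_nhdsGT hxu] with y hy
  simpa [hfx] using hmono (left_mem_Ico.mpr hxu) (Ioo_subset_Ico_self hy) hy.1

theorem eventually_pos_nhdsGT_of_iteratedDeriv {f : ℝ → ℝ} {x : ℝ} {n : ℕ}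
    (hf : ContDiffAt ℝ n f x) (hlow : ∀ i < n, iteratedDeriv i f x = 0)
    (hn : 0 < iteratedDeriv n f x) :
    ∀ᶠ y in 𝓝[>] x, 0 < f y := by
  induction n generalizing f with
  | zero =>
    rw [iteratedDeriv_zero] at hn
    exact nhdsWithin_le_nhds (continuousAt_const.eventually_lt hf.continuousAt hn)
  | succ n ih =>
    refine eventually_pos_nhdsGT_of_deriv hf.continuousAt (by simpa using hlow 0 n.succ_pos)
      (ih (hf.derivWithin (by push_cast; rfl)) (fun i hi => ?_) ?_)
    · rw [← iteratedDeriv_succ']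
      exact hlow (i + 1) (by omega)
    · rwa [← iteratedDeriv_succ']

theorem contDiffOn_Hf {R : ℝ → ℝ} {U : Set ℝ} {n : WithTop ℕ∞} (hU : IsOpen U)
    (hR : ContDiffOn ℝ (n + 1) R U) (hR₀ : ∀ ℓ ∈ U, R ℓ ≠ 0) :
    ContDiffOn ℝ n (Hf R) U :=
  (contDiffOn_const.mul (hR.deriv_of_isOpen hU le_rfl)).div (hR.of_le le_self_add) hR₀

theorem deriv_one_add_of_jang {R Kl KR k : ℝ → ℝ} {ℓ : ℝ}
    (hode : deriv k ℓ = -(Kl ℓ) * k ℓ ^ 2 - Hf R ℓ * k ℓ + trKf Kl KR ℓ) :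
    deriv (fun ℓ => 1 + k ℓ) ℓ =
      (Kl ℓ * (1 - k ℓ) - Hf R ℓ) * (1 + k ℓ) + thetaPlus R KR ℓ := by
  rw [deriv_const_add, hode, trKf, thetaPlus]
  ring

theorem jang_stays_above_right_of_stable_mots_general (R Kl KR k : ℝ → ℝ) (U : Set ℝ)
    (hU : IsOpen U) (ℓs : ℝ) (hℓs : ℓs ∈ U)
    (hR : ContDiffOn ℝ (⊤ : ℕ∞) R U)
    (hKl : ContDiffOn ℝ (⊤ : ℕ∞) Kl U)
    (hKR : ContDiffOn ℝ (⊤ : ℕ∞) KR U)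
    (hRpos : ∀ ℓ ∈ U, 0 < R ℓ)
    (j : ℕ)
    (hθlow : ∀ i < j, iteratedDeriv i (thetaPlus R KR) ℓs = 0)
    (hθj : 0 < iteratedDeriv j (thetaPlus R KR) ℓs)
    (hk : ContDiffOn ℝ (⊤ : ℕ∞) k U)
    (hode : ∀ ℓ ∈ U, deriv k ℓ = -(Kl ℓ) * k ℓ ^ 2 - Hf R ℓ * k ℓ + trKf Kl KR ℓ)
    (hkval : k ℓs = -1) :
    (∀ i, 1 ≤ i → i ≤ j → iteratedDeriv i k ℓs = 0) ∧
    0 < iteratedDeriv (j + 1) k ℓs ∧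
    ∃ ε > 0, ∀ ℓ ∈ Set.Ioo ℓs (ℓs + ε), -1 < k ℓ := by
  have smoothAt : ∀ {f : ℝ → ℝ}, ContDiffOn ℝ (⊤ : ℕ∞) f U → ∀ n : ℕ, ContDiffAt ℝ n f ℓs :=
    fun hf n => (hf.contDiffAt (hU.mem_nhds hℓs)).of_le (mod_cast le_top)
  have hH := contDiffOn_Hf (n := (⊤ : ℕ∞)) hU hR fun ℓ hℓ => (hRpos ℓ hℓ).ne'
  have hw := smoothAt (f := fun ℓ => 1 + k ℓ) (contDiffOn_const.add hk)
  have ha := smoothAt (f := fun ℓ => Kl ℓ * (1 - k ℓ) - Hf R ℓ)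
    ((hKl.mul (contDiffOn_const.sub hk)).sub hH)
  have hθ := smoothAt (f := thetaPlus R KR) ((contDiffOn_const.mul hKR).add hH)
  have hlin : deriv (fun ℓ => 1 + k ℓ) =ᶠ[𝓝 ℓs] fun ℓ =>
      (Kl ℓ * (1 - k ℓ) - Hf R ℓ) * (1 + k ℓ) + thetaPlus R KR ℓ :=
    eventually_of_mem (hU.mem_nhds hℓs) fun ℓ hℓ => deriv_one_add_of_jang (hode ℓ hℓ)
  have hvanish := iteratedDeriv_eq_zero_of_deriv_eq_mul_add (ha j) (hw j) (hθ j) hlin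
    (by simp [hkval]) hθlow
  have hjump := iteratedDeriv_succ_eq_of_deriv_eq_mul_add (ha j) (hw j) (hθ j) hlin hvanish
  have hpos : 0 < iteratedDeriv (j + 1) (fun ℓ => 1 + k ℓ) ℓs := hjump ▸ hθj
  refine ⟨fun i hi hij => ?_, ?_, ?_⟩
  · rw [← iteratedDeriv_const_add hi 1]
    exact hvanish i hij
  · rwa [← iteratedDeriv_const_add j.succ_pos 1]
  · obtain ⟨u, hu, hsub⟩ := mem_nhdsGT_iff_exists_Ioo_subset.mp
      (eventually_pos_nhdsGT_of_iteratedDeriv (hw (j + 1)) (fun i hi => hvanish i (by omega)) hpos)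
    refine ⟨u - ℓs, sub_pos.mpr hu, fun ℓ hℓ => ?_⟩
    have : 0 < 1 + k ℓ := hsub (by simpa using hℓ)
    linarith

/-- At a finitely stable MOTS `ℓ*` where `θ⁺` vanishes to order `j − 1` and
`∂_ℓ^j θ⁺(ℓ*) > 0` (`j ≥ 1`), any smooth solution `k` of the reduced Jang equation
near `ℓ*` with `k(ℓ*) = −1` has `∂_ℓ k(ℓ*) = ⋯ = ∂_ℓ^j k(ℓ*) = 0` and
`∂_ℓ^{j+1} k(ℓ*) > 0`; consequently `k > −1` just to the right of `ℓ*`. -/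
theorem jang_stays_above_right_of_stable_mots (R Kl KR k : ℝ → ℝ) (U : Set ℝ)
    (hU : IsOpen U) (ℓs : ℝ) (hℓs : ℓs ∈ U)
    (hR : ContDiffOn ℝ (⊤ : ℕ∞) R U)
    (hKl : ContDiffOn ℝ (⊤ : ℕ∞) Kl U)
    (hKR : ContDiffOn ℝ (⊤ : ℕ∞) KR U)
    (hRpos : ∀ ℓ ∈ U, 0 < R ℓ)
    (j : ℕ) (hj : 1 ≤ j)
    (hθlow : ∀ i < j, iteratedDeriv i (thetaPlus R KR) ℓs = 0)
    (hθj : 0 < iteratedDeriv j (thetaPlus R KR) ℓs)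
    (hk : ContDiffOn ℝ (⊤ : ℕ∞) k U)
    (hode : ∀ ℓ ∈ U, deriv k ℓ = -(Kl ℓ) * k ℓ ^ 2 - Hf R ℓ * k ℓ + trKf Kl KR ℓ)
    (hkval : k ℓs = -1) :
    (∀ i, 1 ≤ i → i ≤ j → iteratedDeriv i k ℓs = 0) ∧
    0 < iteratedDeriv (j + 1) k ℓs ∧
    ∃ ε > 0, ∀ ℓ ∈ Set.Ioo ℓs (ℓs + ε), -1 < k ℓ :=
  jang_stays_above_right_of_stable_mots_general R Kl KR k U hU ℓs hℓs hR hKl hKR hRpos j hθlow hθj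
    hk hode hkval
end

section
/- Let R, K_ℓ, K_R be smooth with R > 0 on an interval [a,b], and set H = 2R'/R, θ⁺ = 2K_R + H, trK = K_ℓ + 2K_R. Suppose θ⁺(ℓ) > 0 for all ℓ ∈ [a,b]. If k is a C¹ solution of ∂_ℓ k = −K_ℓ k² − H k + trK on [a,b] with k(a) > −1, then k(ℓ) > −1 for all ℓ ∈ [a,b]. -/
open Filter Asymptotics Set Topology

/-- Inner expansion `θ⁻ = 2 K_R − H`. -/
noncomputable def thetaMinus (R KR : ℝ → ℝ) : ℝ → ℝ := fun ℓ => 2 * KR ℓ - Hf R ℓ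

/-!
The level `k = -1` is a lower barrier: wherever a solution touches it, its slope is `θ⁺ > 0`,
so it cannot cross `-1` from above. Mathlib's fencing inequality gives `k ≥ -1`; a first
contact `k(ℓ) = -1` with `ℓ > a` is then impossible, because the positive derivative at `ℓ`
forces `k < -1` just to the left of `ℓ`.
-/

theorem HasDerivAt.eventually_nhdsLT_lt {f : ℝ → ℝ} {f' x : ℝ} (hf : HasDerivAt f f' x)
    (hf' : 0 < f') : ∀ᶠ y in 𝓝[<] x, f y < f x := by
  have hslope : Tendsto (slope f x) (𝓝[<] x) (𝓝 f') :=
    (hasDerivAt_iff_tendsto_slope_left_right.mp hf).1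
  filter_upwards [hslope.eventually (eventually_gt_nhds hf'), self_mem_nhdsWithin]
    with y hy hyx
  exact (slope_pos_iff_gt hyx).mp hy

theorem lt_of_hasDerivAt_pos_of_eq {f f' : ℝ → ℝ} {a b c : ℝ}
    (hf : ∀ x ∈ Icc a b, HasDerivAt f (f' x) x) (hcross : ∀ x ∈ Icc a b, f x = c → 0 < f' x)
    (ha : c < f a) : ∀ x ∈ Icc a b, c < f x := by
  have hle : ∀ x ∈ Icc a b, c ≤ f x := fun x hx =>
    neg_le_neg_iff.mp <| image_le_of_deriv_right_lt_deriv_boundary (f := fun x => -f x)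
      (B := fun _ => -c) (B' := 0)
      (fun x hx => (hf x hx).continuousAt.neg.continuousWithinAt)
      (fun x hx => (hf x (Ico_subset_Icc_self hx)).neg.hasDerivWithinAt)
      (neg_le_neg ha.le) (fun _ => hasDerivAt_const _ _)
      (fun x hx hfx => neg_neg_iff_pos.mpr (hcross x (Ico_subset_Icc_self hx) (neg_inj.mp hfx)))
      hx
  intro x hx
  by_contra hfx
  have hfx : f x = c := le_antisymm (not_lt.mp hfx) (hle x hx)
  have hax : a < x := hx.1.lt_of_ne (by rintro rfl; exact ha.ne' hfx)
  obtain ⟨y, hfy, hy⟩ := ((hf x hx).eventually_nhdsLT_lt (hcross x hx hfx)).and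
    (Ioo_mem_nhdsLT hax) |>.exists
  exact (hle y ⟨hy.1.le, hy.2.le.trans hx.2⟩).not_gt (hfx ▸ hfy)

theorem jang_rhs_at_neg_one (R Kl KR : ℝ → ℝ) (ℓ : ℝ) :
    -(Kl ℓ) * (-1) ^ 2 - Hf R ℓ * (-1) + trKf Kl KR ℓ = thetaPlus R KR ℓ := by
  simp only [trKf, thetaPlus]
  ring

theorem jang_lower_barrier_theta_plus_pos_general (a b : ℝ) (R Kl KR k : ℝ → ℝ)
    (hθ : ∀ ℓ ∈ Set.Icc a b, 0 < thetaPlus R KR ℓ)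
    (hode : ∀ ℓ ∈ Set.Icc a b,
      HasDerivAt k (-(Kl ℓ) * k ℓ ^ 2 - Hf R ℓ * k ℓ + trKf Kl KR ℓ) ℓ)
    (hka : -1 < k a) :
    ∀ ℓ ∈ Set.Icc a b, -1 < k ℓ :=
  lt_of_hasDerivAt_pos_of_eq hode
    (fun ℓ hℓ hkℓ => by rw [hkℓ, jang_rhs_at_neg_one]; exact hθ ℓ hℓ) hka

/-- If `θ⁺ > 0` on `[a,b]`, then a `C¹` solution of the reduced Jang equation on
`[a,b]` with `k(a) > −1` satisfies `k > −1` on all of `[a,b]`. -/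
theorem jang_lower_barrier_theta_plus_pos (a b : ℝ) (hab : a ≤ b) (R Kl KR k : ℝ → ℝ)
    (hR : ContDiffOn ℝ (⊤ : ℕ∞) R (Set.Icc a b))
    (hKl : ContDiffOn ℝ (⊤ : ℕ∞) Kl (Set.Icc a b))
    (hKR : ContDiffOn ℝ (⊤ : ℕ∞) KR (Set.Icc a b))
    (hRpos : ∀ ℓ ∈ Set.Icc a b, 0 < R ℓ)
    (hθ : ∀ ℓ ∈ Set.Icc a b, 0 < thetaPlus R KR ℓ)
    (hode : ∀ ℓ ∈ Set.Icc a b,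
      HasDerivAt k (-(Kl ℓ) * k ℓ ^ 2 - Hf R ℓ * k ℓ + trKf Kl KR ℓ) ℓ)
    (hka : -1 < k a) :
    ∀ ℓ ∈ Set.Icc a b, -1 < k ℓ :=
  jang_lower_barrier_theta_plus_pos_general a b R Kl KR k hθ hode hka
end

section
/- Let R, K_ℓ, K_R be smooth with R > 0 on an interval [a,b], and set H = 2R'/R, θ⁻ = 2K_R − H, trK = K_ℓ + 2K_R. Suppose θ⁻(ℓ) < 0 for all ℓ ∈ [a,b]. If k is a C¹ solution of ∂_ℓ k = −K_ℓ k² − H k + trK on [a,b] with k(a) < 1, then k(ℓ) < 1 for all ℓ ∈ [a,b]. -/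
open Filter Asymptotics Set Topology

/-!
The level `k = 1` is a barrier: writing the right-hand side of the reduced Jang equation as
`K_ℓ (1 - k²) + H (1 - k) + θ⁻`, a solution can only cross `k = 1` with slope `θ⁻ < 0`, i.e.
downwards. A fencing argument gives `k ≤ 1`; a touching point `k = 1` after `a` is then
excluded because the negative slope there forces `k > 1` just to its left.
-/

theorem HasDerivAt.eventually_nhdsLT_lt_of_neg {f : ℝ → ℝ} {f' t : ℝ} (hf : HasDerivAt f f' t)
    (hf' : f' < 0) : ∀ᶠ y in 𝓝[<] t, f t < f y := by
  filter_upwards [hf.hasDerivWithinAt.limsup_slope_le' (lt_irrefl t) hf',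
    self_mem_nhdsWithin] with y hslope (hyt : y < t)
  rw [slope_comm] at hslope
  exact (slope_neg_iff_of_le hyt.le).mp hslope

theorem lt_of_hasDerivAt_neg_of_eq {f f' : ℝ → ℝ} {a b c : ℝ}
    (hf : ∀ x ∈ Icc a b, HasDerivAt f (f' x) x) (ha : f a < c)
    (hcross : ∀ x ∈ Icc a b, f x = c → f' x < 0) : ∀ x ∈ Icc a b, f x < c := by
  have hle : ∀ x ∈ Icc a b, f x ≤ c :=
    image_le_of_deriv_right_lt_deriv_boundary (B := fun _ => c) (B' := fun _ => 0)
      (fun x hx => (hf x hx).continuousAt.continuousWithinAt)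
      (fun x hx => (hf x (Ico_subset_Icc_self hx)).hasDerivWithinAt) ha.le
      (fun _ => hasDerivAt_const _ _) (fun x hx => hcross x (Ico_subset_Icc_self hx))
  intro x hx
  refine (hle x hx).lt_of_ne fun hxc => ?_
  have hax : a < x := hx.1.lt_of_ne fun h => ha.ne (h ▸ hxc)
  obtain ⟨y, hcy, hy⟩ := ((hf x hx).eventually_nhdsLT_lt_of_neg (hcross x hx hxc)).and
    (Ioo_mem_nhdsLT hax) |>.exists
  exact (hle y ⟨hy.1.le, hy.2.le.trans hx.2⟩).not_gt (hxc ▸ hcy)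

theorem jang_rhs_eq (R Kl KR : ℝ → ℝ) (ℓ k : ℝ) :
    -(Kl ℓ) * k ^ 2 - Hf R ℓ * k + trKf Kl KR ℓ =
      Kl ℓ * (1 - k ^ 2) + Hf R ℓ * (1 - k) + thetaMinus R KR ℓ := by
  simp only [trKf, thetaMinus]
  ring

theorem jang_upper_barrier_theta_minus_neg_general (a b : ℝ) (R Kl KR k : ℝ → ℝ)
    (hθ : ∀ ℓ ∈ Set.Icc a b, thetaMinus R KR ℓ < 0)
    (hode : ∀ ℓ ∈ Set.Icc a b,
      HasDerivAt k (-(Kl ℓ) * k ℓ ^ 2 - Hf R ℓ * k ℓ + trKf Kl KR ℓ) ℓ)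
    (hka : k a < 1) :
    ∀ ℓ ∈ Set.Icc a b, k ℓ < 1 :=
  lt_of_hasDerivAt_neg_of_eq hode hka fun ℓ hℓ hkℓ => by
    rw [jang_rhs_eq, hkℓ]
    simpa using hθ ℓ hℓ

/-- If `θ⁻ < 0` on `[a,b]`, then a `C¹` solution of the reduced Jang equation on
`[a,b]` with `k(a) < 1` satisfies `k < 1` on all of `[a,b]`. -/
theorem jang_upper_barrier_theta_minus_neg (a b : ℝ) (hab : a ≤ b) (R Kl KR k : ℝ → ℝ)
    (hR : ContDiffOn ℝ (⊤ : ℕ∞) R (Set.Icc a b))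
    (hKl : ContDiffOn ℝ (⊤ : ℕ∞) Kl (Set.Icc a b))
    (hKR : ContDiffOn ℝ (⊤ : ℕ∞) KR (Set.Icc a b))
    (hRpos : ∀ ℓ ∈ Set.Icc a b, 0 < R ℓ)
    (hθ : ∀ ℓ ∈ Set.Icc a b, thetaMinus R KR ℓ < 0)
    (hode : ∀ ℓ ∈ Set.Icc a b,
      HasDerivAt k (-(Kl ℓ) * k ℓ ^ 2 - Hf R ℓ * k ℓ + trKf Kl KR ℓ) ℓ)
    (hka : k a < 1) :
    ∀ ℓ ∈ Set.Icc a b, k ℓ < 1 :=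
  jang_upper_barrier_theta_minus_neg_general a b R Kl KR k hθ hode hka
end

section
/- (Proposition 1, spherically symmetric blow-up at an outermost MOTS.) Let ℓ₀ ∈ ℝ and let R, K_ℓ, K_R : [ℓ₀,∞) → ℝ be smooth with R > 0; set H = 2R'/R, θ⁺ = 2K_R + H, θ⁻ = 2K_R − H, trK = K_ℓ + 2K_R. Assume the decay conditions |R²/ℓ² − 1| = O(ℓ⁻¹), |H − 2/ℓ| = O(ℓ⁻²), |∂_ℓ H + 2/ℓ²| = O(ℓ⁻³), |K_ℓ|, |K_R| = O(ℓ⁻²), |∂_ℓ K_ℓ|, |∂_ℓ K_R| = O(ℓ⁻³), |trK| = O(ℓ⁻³), and that either θ⁻(ℓ) < 0 for all ℓ or trK(ℓ) < 0 for all ℓ. Suppose ℓ* ≥ ℓ₀ satisfies θ⁺(ℓ*) = 0, θ⁺(ℓ) > 0 for all ℓ > ℓ* (ℓ* is the outermost MOTS), and there is m ≥ 1 with ∂_ℓ^m θ⁺(ℓ*) > 0 (ℓ* is finitely stable). Then there exists a smooth solution k of ∂_ℓ k = −K_ℓ k² − H k + trK on [ℓ*,∞) with k(ℓ*) = −1,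 ∂_ℓ k(ℓ*) = 0, |k(ℓ)| < 1 for all ℓ > ℓ*, and k(ℓ) → 0 as ℓ → ∞ (a blow-up solution for ℓ*). -/
open Filter Asymptotics Set Topology

/-- The asymptotic flatness decay conditions (2.8)-(2.13) of the paper:
`|R²/ℓ² − 1| = O(ℓ⁻¹)`, `|H − 2/ℓ| = O(ℓ⁻²)`, `|∂_ℓ H + 2/ℓ²| = O(ℓ⁻³)`,
`|K_ℓ|, |K_R| = O(ℓ⁻²)`, `|∂_ℓ K_ℓ|, |∂_ℓ K_R| = O(ℓ⁻³)`, `|trK| = O(ℓ⁻³)`. -/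
def JangDecay (R Kl KR : ℝ → ℝ) : Prop :=
  (fun ℓ => R ℓ ^ 2 / ℓ ^ 2 - 1) =O[Filter.atTop] (fun ℓ : ℝ => ℓ⁻¹) ∧
  (fun ℓ => Hf R ℓ - 2 / ℓ) =O[Filter.atTop] (fun ℓ : ℝ => (ℓ ^ 2)⁻¹) ∧
  (fun ℓ => deriv (Hf R) ℓ + 2 / ℓ ^ 2) =O[Filter.atTop] (fun ℓ : ℝ => (ℓ ^ 3)⁻¹) ∧
  Kl =O[Filter.atTop] (fun ℓ : ℝ => (ℓ ^ 2)⁻¹) ∧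
  KR =O[Filter.atTop] (fun ℓ : ℝ => (ℓ ^ 2)⁻¹) ∧
  deriv Kl =O[Filter.atTop] (fun ℓ : ℝ => (ℓ ^ 3)⁻¹) ∧
  deriv KR =O[Filter.atTop] (fun ℓ : ℝ => (ℓ ^ 3)⁻¹) ∧
  trKf Kl KR =O[Filter.atTop] (fun ℓ : ℝ => (ℓ ^ 3)⁻¹)

/-- A blow-up solution for the surface `ℓ*`: a smooth solution `k` of the reduced
Jang equation `∂_ℓ k = −K_ℓ k² − H k + trK` on `[ℓ*,∞)` with `k(ℓ*) = −1`,
`|k(ℓ)| < 1` for all `ℓ > ℓ*`, and `k(ℓ) → 0` as `ℓ → ∞`. -/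
def IsBlowupSolution (R Kl KR : ℝ → ℝ) (ℓs : ℝ) (k : ℝ → ℝ) : Prop :=
  ContDiffOn ℝ (⊤ : ℕ∞) k (Set.Ici ℓs) ∧
  (∀ ℓ ∈ Set.Ici ℓs,
    HasDerivAt k (-(Kl ℓ) * k ℓ ^ 2 - Hf R ℓ * k ℓ + trKf Kl KR ℓ) ℓ) ∧
  k ℓs = -1 ∧
  (∀ ℓ, ℓs < ℓ → |k ℓ| < 1) ∧
  Filter.Tendsto k Filter.atTop (nhds 0)

/-!
Truncating the Riccati field `-K_ℓ k² - H k + trK` at `|k| = 1` makes it globally Lipschitz in `k`,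
so Picard–Lindelöf gives a solution on a neighbourhood of `[ℓ*, ∞)` with `k(ℓ*) = -1`. The
truncation is never active: at `k = -1` the field equals `θ⁺ > 0` beyond `ℓ*`, and at `k = 1` it
equals `θ⁻ < 0` (resp. at `k = 0` it equals `trK < 0`), so `k` is trapped in `(-1, 1)`. The decay
conditions give `ℓ K_ℓ → 0`, `ℓ trK → 0` and `ℓ H → 2`, so wherever `ε ≤ |k| ≤ 1` the field pushes
`k` towards `0` at rate at least `ε / ℓ`; since `∫ dℓ / ℓ` diverges, `k` eventually enters and
stays in `(-ε, ε)`.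
-/

open scoped NNReal ContDiff

section CauchyLipschitz

variable {E : Type*} [NormedAddCommGroup E] [NormedSpace ℝ E] [CompleteSpace E]

theorem exists_hasDerivWithinAt_Icc_of_lipschitzWith {f : ℝ → E → E} {a b t₀ : ℝ}
    (ht₀ : t₀ ∈ Icc a b) (x₀ : E) {K C : ℝ≥0}
    (hcont : ∀ x, ContinuousOn (f · x) (Icc a b))
    (hlip : ∀ t ∈ Icc a b, LipschitzWith K (f t))
    (hbdd : ∀ t ∈ Icc a b, ∀ x, ‖f t x‖ ≤ C) :
    ∃ α : ℝ → E, α t₀ = x₀ ∧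
      ∀ t ∈ Icc a b, HasDerivWithinAt α (f t (α t)) (Icc a b) t := by
  have hf : IsPicardLindelof f ⟨t₀, ht₀⟩ x₀ (C * (b - a).toNNReal) 0 C K := by
    refine ⟨fun t ht ↦ (hlip t ht).lipschitzOnWith, fun x _ ↦ hcont x,
      fun t ht x _ ↦ hbdd t ht x, ?_⟩
    have : max (b - t₀) (t₀ - a) ≤ b - a := max_le (by linarith [ht₀.1]) (by linarith [ht₀.2])
    simpa [Real.coe_toNNReal _ (sub_nonneg.2 (ht₀.1.trans ht₀.2))] using
      mul_le_mul_of_nonneg_left this C.2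
  exact hf.exists_eq_forall_mem_Icc_hasDerivWithinAt₀

theorem exists_forall_hasDerivAt_Ioi_of_lipschitzWith {f : ℝ → E → E} {a t₀ : ℝ}
    (ht₀ : a < t₀) (x₀ : E)
    (hcont : ∀ x, ContinuousOn (f · x) (Ici a))
    (hlip : ∀ b, ∃ K, ∀ t ∈ Icc a b, LipschitzWith K (f t))
    (hbdd : ∀ b, ∃ C : ℝ≥0, ∀ t ∈ Icc a b, ∀ x, ‖f t x‖ ≤ C) :
    ∃ α : ℝ → E, α t₀ = x₀ ∧ ∀ t ∈ Ioi a, HasDerivAt α (f t (α t)) t := by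
  set T : ℕ → ℝ := fun n ↦ t₀ + n + 1
  have hT_gt : ∀ n, t₀ < T n := fun n ↦ by
    simp only [T]; linarith [(Nat.cast_nonneg n : (0 : ℝ) ≤ n)]
  have hT : ∀ n, t₀ ∈ Icc a (T n) := fun n ↦ ⟨ht₀.le, (hT_gt n).le⟩
  choose sol hsol₀ hsol using fun n ↦
    have ⟨K, hK⟩ := hlip (T n)
    have ⟨C, hC⟩ := hbdd (T n)
    exists_hasDerivWithinAt_Icc_of_lipschitzWith (hT n) x₀
      (fun x ↦ (hcont x).mono Icc_subset_Ici_self) hK hC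
  have hsol' : ∀ n, ∀ t ∈ Ioo a (T n), HasDerivAt (sol n) (f t (sol n t)) t := fun n t ht ↦
    (hsol n t (Ioo_subset_Icc_self ht)).hasDerivAt (Icc_mem_nhds ht.1 ht.2)
  have hT_mono : Monotone T := fun n m h ↦ by simp only [T]; gcongr
  have hagree : ∀ n m, n ≤ m → EqOn (sol n) (sol m) (Ioo a (T n)) := by
    intro n m hnm
    obtain ⟨K, hK⟩ := hlip (T m)
    have hsub : Ioo a (T n) ⊆ Icc a (T m) :=
      Ioo_subset_Icc_self.trans (Icc_subset_Icc_right (hT_mono hnm))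
    exact ODE_solution_unique_of_mem_Ioo (s := fun _ ↦ univ)
      (fun t ht ↦ (hK t (hsub ht)).lipschitzOnWith)
      ⟨ht₀, hT_gt n⟩
      (fun t ht ↦ ⟨hsol' n t ht, trivial⟩)
      (fun t ht ↦ ⟨hsol' m t (Ioo_subset_Ioo_right (hT_mono hnm) ht), trivial⟩)
      (by rw [hsol₀, hsol₀])
  set idx : ℝ → ℕ := fun t ↦ ⌈t - t₀⌉₊
  have hidx : ∀ t, t < T (idx t) := fun t ↦ by
    simp only [T, idx]; linarith [Nat.le_ceil (t - t₀)]
  set α : ℝ → E := fun t ↦ sol (idx t) t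
  have hα : ∀ n, ∀ t ∈ Ioo a (T n), α t = sol n t := fun n t ht ↦ by
    rcases le_total (idx t) n with h | h
    · exact hagree _ _ h ⟨ht.1, hidx t⟩
    · exact (hagree _ _ h ht).symm
  refine ⟨α, (hα 0 t₀ ⟨ht₀, hT_gt 0⟩).trans (hsol₀ 0), fun t ht ↦ ?_⟩
  have hmem : t ∈ Ioo a (T (idx t)) := ⟨ht, hidx t⟩
  rw [hα _ t hmem]
  exact (hsol' _ t hmem).congr_of_eventuallyEq
    (eventually_of_mem (Ioo_mem_nhds hmem.1 hmem.2) fun y hy ↦ hα _ y hy)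

end CauchyLipschitz

section Comparison

variable {f f' : ℝ → ℝ} {a c : ℝ}

theorem lt_of_forall_le_of_hasDerivAt_ne_zero {x d : ℝ} (hle : ∀ y ∈ Ici a, f y ≤ c)
    (hx : a < x) (hd : HasDerivAt f d x) (hd₀ : f x = c → d ≠ 0) : f x < c := by
  refine (hle x hx.le).lt_of_ne fun hfx ↦ hd₀ hfx (IsLocalMax.hasDerivAt_eq_zero ?_ hd)
  filter_upwards [Ioi_mem_nhds hx] with y hy
  exact hfx ▸ hle y (mem_Ici.2 (le_of_lt hy))

theorem forall_lt_of_hasDerivAt_neg (hf : ∀ x ∈ Ici a, HasDerivAt f (f' x) x) (ha : f a < c)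
    (hc : ∀ x ∈ Ioi a, f x = c → f' x < 0) : ∀ x ∈ Ici a, f x < c := by
  have hle : ∀ y ∈ Ici a, f y ≤ c := fun y hy ↦
    image_le_of_deriv_right_lt_deriv_boundary (B := fun _ ↦ c) (B' := 0)
      (fun x hx ↦ (hf x hx.1).continuousAt.continuousWithinAt)
      (fun x hx ↦ (hf x hx.1).hasDerivWithinAt) ha.le (fun _ ↦ hasDerivAt_const _ _)
      (fun x hx hfx ↦ hc x (hx.1.lt_of_ne fun h ↦ (h ▸ ha).ne hfx) hfx) ⟨hy, le_rfl⟩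
  intro x hx
  rcases (mem_Ici.1 hx).eq_or_lt with rfl | hax
  · exact ha
  · exact lt_of_forall_le_of_hasDerivAt_ne_zero hle hax (hf x hx) fun hfx ↦ (hc x hax hfx).ne

theorem forall_gt_of_hasDerivAt_pos (hf : ∀ x ∈ Ici a, HasDerivAt f (f' x) x) (ha : c < f a)
    (hc : ∀ x ∈ Ioi a, f x = c → 0 < f' x) : ∀ x ∈ Ici a, c < f x := fun x hx ↦
  neg_lt_neg_iff.1 <| forall_lt_of_hasDerivAt_neg (f := -f) (fun x hx ↦ (hf x hx).neg)
    (neg_lt_neg ha) (fun x hx hfx ↦ neg_neg_of_pos (hc x hx (neg_inj.1 hfx))) x hx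

theorem tendsto_atBot_of_hasDerivAt_le_neg_div {ε : ℝ} (ha : 0 < a) (hε : 0 < ε)
    (hf : ∀ x ∈ Ici a, HasDerivAt f (f' x) x) (hdrift : ∀ x ∈ Ici a, f' x ≤ -ε / x) :
    Tendsto f atTop atBot := by
  have hanti : AntitoneOn (fun x ↦ f x + ε * Real.log x) (Ici a) := by
    refine antitoneOn_of_hasDerivWithinAt_nonpos (f' := fun x ↦ f' x + ε / x) (convex_Ici a)
      (fun x hx ↦ ((hf x hx).continuousAt.add ((Real.continuousAt_log
        (ha.trans_le hx).ne').const_mul ε)).continuousWithinAt) (fun x hx ↦ ?_) (fun x hx ↦ ?_)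
    all_goals rw [interior_Ici, mem_Ioi] at hx
    · exact (((hf x hx.le).add ((Real.hasDerivAt_log (ha.trans hx).ne').const_mul ε)).congr_deriv
        (by ring)).hasDerivWithinAt
    · linarith [neg_div x ε ▸ hdrift x hx.le]
  have hlog : Tendsto (fun x ↦ f a + ε * Real.log a + -(ε * Real.log x)) atTop atBot :=
    tendsto_atBot_add_const_left _ _
      (tendsto_neg_atTop_atBot.comp (Real.tendsto_log_atTop.const_mul_atTop hε))
  refine tendsto_atBot_mono' atTop ?_ hlog
  filter_upwards [eventually_ge_atTop a] with x hx
  linarith [hanti self_mem_Ici hx hx]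

theorem eventually_lt_of_hasDerivAt_le_neg_div {m ε : ℝ} (hε : 0 < ε)
    (hf : ∀ᶠ x in atTop, HasDerivAt f (f' x) x) (hm : ∀ᶠ x in atTop, m ≤ f x)
    (hdrift : ∀ᶠ x in atTop, c ≤ f x → f' x ≤ -ε / x) : ∀ᶠ x in atTop, f x < c := by
  obtain ⟨a, ha⟩ := eventually_atTop.1 (((hf.and hm).and hdrift).and (eventually_gt_atTop 0))
  by_cases hent : ∃ b ≥ a, f b < c
  · obtain ⟨b, hb, hfb⟩ := hent
    filter_upwards [eventually_ge_atTop b] with x hx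
    refine forall_lt_of_hasDerivAt_neg (fun y (hy : b ≤ y) ↦ (ha y (hb.trans hy)).1.1.1) hfb
      (fun y (hy : b < y) hfy ↦ ?_) x hx
    obtain ⟨⟨-, hdrift⟩, hy₀⟩ := ha y (hb.trans hy.le)
    exact (hdrift hfy.ge).trans_lt (div_neg_of_neg_of_pos (neg_neg_of_pos hε) hy₀)
  · push Not at hent
    obtain ⟨x, hxa, hx⟩ := ((eventually_ge_atTop a).and
      ((tendsto_atBot_of_hasDerivAt_le_neg_div (ha a le_rfl).2 hε (fun x hx ↦ (ha x hx).1.1.1)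
        fun x hx ↦ (ha x hx).1.2 (hent x hx)).eventually_lt_atBot m)).exists
    exact absurd (ha x hxa).1.1.2 (not_le.2 hx)

end Comparison

def riccati (p h q : ℝ → ℝ) (t x : ℝ) : ℝ := -p t * x ^ 2 - h t * x + q t

def clamp (x : ℝ) : ℝ := max (-1) (min 1 x)

lemma clamp_mem_Icc (x : ℝ) : clamp x ∈ Icc (-1 : ℝ) 1 :=
  ⟨le_max_left _ _, max_le (by norm_num) (min_le_left _ _)⟩

lemma clamp_of_mem_Icc {x : ℝ} (hx : x ∈ Icc (-1 : ℝ) 1) : clamp x = x := by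
  simp [clamp, hx.1, hx.2]

lemma clamp_of_le_neg_one {x : ℝ} (hx : x ≤ -1) : clamp x = -1 := by
  simp [clamp, hx, hx.trans (by norm_num : (-1 : ℝ) ≤ 1)]

lemma lipschitzWith_clamp : LipschitzWith 1 clamp :=
  (LipschitzWith.id.const_min 1).const_max (-1)

lemma riccati_zero (p h q : ℝ → ℝ) (t : ℝ) : riccati p h q t 0 = q t := by simp [riccati]

lemma riccati_neg_neg_neg (p h q : ℝ → ℝ) (t x : ℝ) :
    riccati (-p) h (-q) t (-x) = -riccati p h q t x := by
  simp only [riccati, Pi.neg_apply]; ring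

lemma abs_riccati_clamp_sub_le (p h q : ℝ → ℝ) (t x y : ℝ) :
    |riccati p h q t (clamp x) - riccati p h q t (clamp y)| ≤ (2 * |p t| + |h t|) * |x - y| := by
  obtain ⟨hx₁, hx₂⟩ := clamp_mem_Icc x
  obtain ⟨hy₁, hy₂⟩ := clamp_mem_Icc y
  have hsum : |clamp x + clamp y| ≤ 2 := abs_le.2 ⟨by linarith, by linarith⟩
  have hdiff : |clamp x - clamp y| ≤ |x - y| := by
    simpa [Real.dist_eq] using lipschitzWith_clamp.dist_le_mul x y
  calc |riccati p h q t (clamp x) - riccati p h q t (clamp y)|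
      = |-p t * (clamp x + clamp y) - h t| * |clamp x - clamp y| := by
        rw [← abs_mul]; congr 1; simp only [riccati]; ring
    _ ≤ (|p t| * |clamp x + clamp y| + |h t|) * |clamp x - clamp y| := by
        gcongr
        exact (abs_sub _ _).trans (by rw [abs_mul, abs_neg])
    _ ≤ (|p t| * 2 + |h t|) * |x - y| := by gcongr
    _ = (2 * |p t| + |h t|) * |x - y| := by ring

lemma abs_riccati_clamp_le (p h q : ℝ → ℝ) (t x : ℝ) :
    |riccati p h q t (clamp x)| ≤ |p t| + |h t| + |q t| := by
  have hc : |clamp x| ≤ 1 := abs_le.2 (clamp_mem_Icc x)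
  calc |riccati p h q t (clamp x)|
      ≤ |p t| * |clamp x| ^ 2 + |h t| * |clamp x| + |q t| := by
        rw [← abs_pow, ← abs_mul, ← abs_mul, ← abs_neg (p t * _)]
        refine (abs_add_le _ _).trans (add_le_add_left ((abs_sub _ _).trans_eq ?_) _)
        simp only [neg_mul]
    _ ≤ |p t| + |h t| + |q t| := by
        gcongr
        · exact mul_le_of_le_one_right (abs_nonneg _) (pow_le_one₀ (abs_nonneg _) hc)
        · exact mul_le_of_le_one_right (abs_nonneg _) hc

section Riccati

variable {p h q k : ℝ → ℝ}

theorem exists_hasDerivAt_riccati_clamp {a t₀ : ℝ} (ht₀ : a < t₀) (x₀ : ℝ)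
    (hp : ContinuousOn p (Ici a)) (hh : ContinuousOn h (Ici a)) (hq : ContinuousOn q (Ici a)) :
    ∃ k : ℝ → ℝ, k t₀ = x₀ ∧ ∀ t ∈ Ioi a, HasDerivAt k (riccati p h q t (clamp (k t))) t := by
  have hB : ∀ b, ∃ B, ∀ t ∈ Icc a b, |p t| + |h t| + |q t| ≤ B := fun b ↦ by
    obtain ⟨B, hB⟩ := isCompact_Icc.exists_bound_of_continuousOn
      (((hp.abs.add hh.abs).add hq.abs).mono (Icc_subset_Ici_self : Icc a b ⊆ Ici a))
    exact ⟨B, fun t ht ↦ (le_abs_self _).trans (hB t ht)⟩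
  refine exists_forall_hasDerivAt_Ioi_of_lipschitzWith (f := fun t x ↦ riccati p h q t (clamp x))
    ht₀ x₀ (fun x ↦ ?_) (fun b ↦ ?_) (fun b ↦ ?_)
  · simp only [riccati]
    exact ((hp.neg.mul continuousOn_const).sub (hh.mul continuousOn_const)).add hq
  · obtain ⟨B, hB⟩ := hB b
    refine ⟨(2 * B).toNNReal, fun t ht ↦ LipschitzWith.of_dist_le_mul fun x y ↦ ?_⟩
    rw [Real.dist_eq, Real.dist_eq]
    refine (abs_riccati_clamp_sub_le p h q t x y).trans (mul_le_mul_of_nonneg_right ?_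
      (abs_nonneg _))
    have := hB t ht
    exact (by linarith [abs_nonneg (h t), abs_nonneg (q t)] : _ ≤ 2 * B).trans
      (Real.le_coe_toNNReal _)
  · obtain ⟨B, hB⟩ := hB b
    exact ⟨B.toNNReal, fun t ht x ↦ (abs_riccati_clamp_le p h q t x).trans
      ((hB t ht).trans (Real.le_coe_toNNReal _))⟩

theorem contDiffOn_of_hasDerivWithinAt_riccati {s : Set ℝ} (hs : UniqueDiffOn ℝ s)
    (hp : ContDiffOn ℝ ∞ p s) (hh : ContDiffOn ℝ ∞ h s) (hq : ContDiffOn ℝ ∞ q s)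
    (hk : ∀ t ∈ s, HasDerivWithinAt k (riccati p h q t (k t)) s t) : ContDiffOn ℝ ∞ k s := by
  refine contDiffOn_infty.2 fun n ↦ ?_
  induction n with
  | zero => exact contDiffOn_zero.2 fun t ht ↦ (hk t ht).continuousWithinAt
  | succ n ih =>
    rw [Nat.cast_add_one, contDiffOn_succ_iff_derivWithin hs]
    refine ⟨fun t ht ↦ (hk t ht).differentiableWithinAt, by simp, ?_⟩
    have hle : (n : WithTop ℕ∞) ≤ ∞ := mod_cast le_top
    refine ((((hp.of_le hle).neg.mul (ih.pow 2)).sub ((hh.of_le hle).mul ih)).add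
      (hq.of_le hle)).congr fun t ht ↦ ?_
    exact (hk t ht).derivWithin (hs t ht)

variable {t₀ : ℝ}

theorem lt_one_of_hasDerivAt_riccati_clamp
    (hk : ∀ t ∈ Ici t₀, HasDerivAt k (riccati p h q t (clamp (k t))) t) (hk₀ : k t₀ = -1)
    (hsign : (∀ t ∈ Ioi t₀, riccati p h q t 1 < 0) ∨ ∀ t ∈ Ioi t₀, q t < 0) :
    ∀ t ∈ Ici t₀, k t < 1 := by
  rcases hsign with hsign | hsign
  · refine forall_lt_of_hasDerivAt_neg hk (by rw [hk₀]; norm_num) fun t ht hkt ↦ ?_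
    rw [hkt, clamp_of_mem_Icc (by norm_num)]
    exact hsign t ht
  · refine fun t ht ↦ (forall_lt_of_hasDerivAt_neg (c := 0) hk (by rw [hk₀]; norm_num)
      (fun t ht hkt ↦ ?_) t ht).trans one_pos
    rw [hkt, clamp_of_mem_Icc (by norm_num), riccati_zero]
    exact hsign t ht

theorem neg_one_lt_of_hasDerivAt_riccati_clamp
    (hk : ∀ t ∈ Ici t₀, HasDerivAt k (riccati p h q t (clamp (k t))) t) (hk₀ : k t₀ = -1)
    (hpos : ∀ t ∈ Ioi t₀, 0 < riccati p h q t (-1)) : ∀ t ∈ Ioi t₀, -1 < k t := by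
  have hle : ∀ t ∈ Ici t₀, (-k) t ≤ 1 := fun t ht ↦ by
    refine neg_le.1 (le_of_forall_lt fun c hc ↦ ?_)
    refine forall_gt_of_hasDerivAt_pos hk (hk₀ ▸ hc) (fun s hs hks ↦ ?_) t ht
    rw [hks, clamp_of_le_neg_one hc.le]
    exact hpos s hs
  intro t ht
  have := lt_of_forall_le_of_hasDerivAt_ne_zero hle ht (hk t (mem_Ici.2 ht.le)).neg fun hkt ↦ by
    rw [neg_eq_iff_eq_neg.1 hkt, clamp_of_le_neg_one le_rfl, neg_ne_zero]
    exact (hpos t ht).ne'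
  exact neg_lt.1 this

theorem hasDerivAt_riccati_of_hasDerivAt_riccati_clamp
    (hk : ∀ t ∈ Ici t₀, HasDerivAt k (riccati p h q t (clamp (k t))) t) (hk₀ : k t₀ = -1)
    (hsign : (∀ t ∈ Ioi t₀, riccati p h q t 1 < 0) ∨ ∀ t ∈ Ioi t₀, q t < 0)
    (hpos : ∀ t ∈ Ioi t₀, 0 < riccati p h q t (-1)) :
    (∀ t ∈ Ici t₀, HasDerivAt k (riccati p h q t (k t)) t ∧ |k t| ≤ 1) ∧
      ∀ t ∈ Ioi t₀, |k t| < 1 := by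
  have hlt := lt_one_of_hasDerivAt_riccati_clamp hk hk₀ hsign
  have hgt := neg_one_lt_of_hasDerivAt_riccati_clamp hk hk₀ hpos
  have hmem : ∀ t ∈ Ici t₀, k t ∈ Icc (-1) 1 := fun t ht ↦ by
    refine ⟨?_, (hlt t ht).le⟩
    rcases (mem_Ici.1 ht).eq_or_lt with rfl | ht'
    exacts [hk₀.ge, (hgt t ht').le]
  exact ⟨fun t ht ↦ ⟨clamp_of_mem_Icc (hmem t ht) ▸ hk t ht, abs_le.2 (hmem t ht)⟩,
    fun t ht ↦ abs_lt.2 ⟨hgt t ht, hlt t (mem_Ici.2 ht.le)⟩⟩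

theorem eventually_riccati_le_neg_div {ε : ℝ} (hε : 0 < ε)
    (hp : Tendsto (fun t ↦ t * p t) atTop (𝓝 0)) (hh : Tendsto (fun t ↦ t * h t) atTop (𝓝 2))
    (hq : Tendsto (fun t ↦ t * q t) atTop (𝓝 0)) :
    ∀ᶠ t in atTop, ∀ x ∈ Icc ε 1, riccati p h q t x ≤ -ε / t := by
  have hε4 : 0 < ε / 4 := by positivity
  filter_upwards [hp.eventually (Ioo_mem_nhds (neg_neg_of_pos hε4) hε4),
    hh.eventually (lt_mem_nhds (by norm_num : (3 / 2 : ℝ) < 2)),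
    hq.eventually (Ioo_mem_nhds (neg_neg_of_pos hε4) hε4), eventually_gt_atTop 0]
    with t hp₁ hh₁ hq₁ ht x ⟨hx₁, hx₂⟩
  rw [le_div_iff₀ ht]
  have hp₁ := hp₁.1
  have hq₁ := hq₁.2
  have hx₀ : 0 < x := hε.trans_le hx₁
  have hquad : -(t * p t) * x ^ 2 ≤ ε / 4 :=
    calc -(t * p t) * x ^ 2 ≤ ε / 4 * x ^ 2 := by gcongr; linarith
      _ ≤ ε / 4 := mul_le_of_le_one_right hε4.le (pow_le_one₀ hx₀.le hx₂)
  have hlin : 3 / 2 * ε ≤ t * h t * x := by nlinarith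
  calc riccati p h q t x * t = -(t * p t) * x ^ 2 - t * h t * x + t * q t := by
        simp only [riccati]; ring
    _ ≤ -ε := by linarith

theorem eventually_lt_of_hasDerivAt_riccati {ε : ℝ} (hε : 0 < ε)
    (hp : Tendsto (fun t ↦ t * p t) atTop (𝓝 0)) (hh : Tendsto (fun t ↦ t * h t) atTop (𝓝 2))
    (hq : Tendsto (fun t ↦ t * q t) atTop (𝓝 0))
    (hk : ∀ᶠ t in atTop, HasDerivAt k (riccati p h q t (k t)) t)
    (hbdd : ∀ᶠ t in atTop, |k t| ≤ 1) : ∀ᶠ t in atTop, k t < ε := by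
  refine eventually_lt_of_hasDerivAt_le_neg_div (m := -1) hε hk
    (hbdd.mono fun t ht ↦ (abs_le.1 ht).1) ?_
  filter_upwards [eventually_riccati_le_neg_div hε hp hh hq, hbdd] with t hdrift hkt hεk
  exact hdrift _ ⟨hεk, (abs_le.1 hkt).2⟩

theorem tendsto_zero_of_hasDerivAt_riccati
    (hp : Tendsto (fun t ↦ t * p t) atTop (𝓝 0)) (hh : Tendsto (fun t ↦ t * h t) atTop (𝓝 2))
    (hq : Tendsto (fun t ↦ t * q t) atTop (𝓝 0))
    (hk : ∀ᶠ t in atTop, HasDerivAt k (riccati p h q t (k t)) t)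
    (hbdd : ∀ᶠ t in atTop, |k t| ≤ 1) : Tendsto k atTop (𝓝 0) := by
  have hneg : ∀ᶠ t in atTop, HasDerivAt (-k) (riccati (-p) h (-q) t ((-k) t)) t :=
    hk.mono fun t ht ↦ by simpa only [Pi.neg_apply, riccati_neg_neg_neg] using ht.neg
  refine tendsto_order.2 ⟨fun ε hε ↦ ?_,
    fun ε hε ↦ eventually_lt_of_hasDerivAt_riccati hε hp hh hq hk hbdd⟩
  filter_upwards [eventually_lt_of_hasDerivAt_riccati (neg_pos.2 hε) (by simpa using hp.neg) hh
    (by simpa using hq.neg) hneg (by simpa using hbdd)] with t ht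
  simp only [Pi.neg_apply] at ht
  linarith

end Riccati

theorem exists_lt_forall_Ici_pos {f : ℝ → ℝ} {b c : ℝ} (hf : ContinuousAt f c) (hbc : b ≤ c)
    (hpos : ∀ x ∈ Ici b, 0 < f x) : ∃ a < c, ∀ x ∈ Ici a, 0 < f x := by
  obtain ⟨l, u, ⟨hlc, hcu⟩, hsub⟩ :=
    mem_nhds_iff_exists_Ioo_subset.1 (hf.eventually (lt_mem_nhds (hpos c hbc)))
  refine ⟨(l + c) / 2, by linarith, fun x (hx : (l + c) / 2 ≤ x) ↦ ?_⟩
  rcases le_or_gt b x with hbx | hxb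
  · exact hpos x hbx
  · exact hsub ⟨by linarith, by linarith⟩

theorem tendsto_mul_of_isBigO_inv_pow {f : ℝ → ℝ} {n : ℕ} (hn : 2 ≤ n)
    (hf : f =O[atTop] fun t ↦ (t ^ n)⁻¹) : Tendsto (fun t ↦ t * f t) atTop (𝓝 0) := by
  obtain ⟨m, rfl⟩ := Nat.exists_eq_add_of_le' hn
  refine ((isBigO_refl (fun t : ℝ ↦ t) atTop).mul hf).trans_tendsto ?_
  refine ((tendsto_pow_atTop (n := m + 1) m.succ_ne_zero).inv_tendsto_atTop).congr' ?_
  filter_upwards [eventually_ne_atTop 0] with t ht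
  simp only [Pi.inv_apply]
  field_simp
  ring

theorem tendsto_mul_of_sub_div_isBigO {f : ℝ → ℝ} {c : ℝ}
    (hf : (fun t ↦ f t - c / t) =O[atTop] fun t ↦ (t ^ 2)⁻¹) :
    Tendsto (fun t ↦ t * f t) atTop (𝓝 c) := by
  refine (zero_add c ▸ (tendsto_mul_of_isBigO_inv_pow le_rfl hf).add_const c).congr' ?_
  filter_upwards [eventually_ne_atTop 0] with t ht
  field_simp
  ring

theorem contDiffOn_Hf_s8 {R : ℝ → ℝ} (hR : ContDiff ℝ ∞ R) :
    ContDiffOn ℝ ∞ (Hf R) {x | R x ≠ 0} :=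
  (contDiff_const.mul (contDiff_infty_iff_deriv.1 hR).2).contDiffOn.div hR.contDiffOn
    fun _ hx ↦ hx

lemma riccati_Hf_trKf_one (R Kl KR : ℝ → ℝ) (t : ℝ) :
    riccati Kl (Hf R) (trKf Kl KR) t 1 = thetaMinus R KR t := by
  simp only [riccati, trKf, thetaMinus]; ring

lemma riccati_Hf_trKf_neg_one (R Kl KR : ℝ → ℝ) (t : ℝ) :
    riccati Kl (Hf R) (trKf Kl KR) t (-1) = thetaPlus R KR t := by
  simp only [riccati, trKf, thetaPlus]; ring

theorem blowup_exists_outermost_mots_general (ℓ₀ : ℝ) (R Kl KR : ℝ → ℝ)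
    (hR : ContDiff ℝ (⊤ : ℕ∞) R)
    (hKl : ContDiff ℝ (⊤ : ℕ∞) Kl)
    (hKR : ContDiff ℝ (⊤ : ℕ∞) KR)
    (hRpos : ∀ ℓ ∈ Set.Ici ℓ₀, 0 < R ℓ)
    (hdecay : JangDecay R Kl KR)
    (hsign : (∀ ℓ ∈ Set.Ici ℓ₀, thetaMinus R KR ℓ < 0) ∨
             (∀ ℓ ∈ Set.Ici ℓ₀, trKf Kl KR ℓ < 0))
    (ℓs : ℝ) (hℓs : ℓ₀ ≤ ℓs)
    (hmots : thetaPlus R KR ℓs = 0)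
    (houtermost : ∀ ℓ, ℓs < ℓ → 0 < thetaPlus R KR ℓ) :
    ∃ k : ℝ → ℝ, IsBlowupSolution R Kl KR ℓs k ∧ deriv k ℓs = 0 := by
  obtain ⟨a, ha, hRa⟩ := exists_lt_forall_Ici_pos hR.continuous.continuousAt hℓs hRpos
  have hH : ContDiffOn ℝ ∞ (Hf R) (Ici a) := (contDiffOn_Hf_s8 hR).mono fun x hx ↦ (hRa x hx).ne'
  have htrK : ContDiff ℝ ∞ (trKf Kl KR) := hKl.add (contDiff_const.mul hKR)
  obtain ⟨k, hk₀, hk⟩ := exists_hasDerivAt_riccati_clamp ha (-1) hKl.continuous.continuousOn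
    hH.continuousOn htrK.continuous.continuousOn
  obtain ⟨hode, hlt⟩ := hasDerivAt_riccati_of_hasDerivAt_riccati_clamp
    (fun t ht ↦ hk t (ha.trans_le ht)) hk₀
    (hsign.imp (fun h t ht ↦ riccati_Hf_trKf_one R Kl KR t ▸ h t (hℓs.trans ht.le))
      fun h t ht ↦ h t (hℓs.trans ht.le))
    fun t ht ↦ riccati_Hf_trKf_neg_one R Kl KR t ▸ houtermost t ht
  obtain ⟨-, hHO, -, hKlO, -, -, -, htrKO⟩ := hdecay
  refine ⟨k, ⟨?_, fun t ht ↦ (hode t ht).1, hk₀, hlt, ?_⟩, ?_⟩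
  · exact contDiffOn_of_hasDerivWithinAt_riccati (uniqueDiffOn_Ici ℓs) hKl.contDiffOn
      (hH.mono (Ici_subset_Ici.2 ha.le)) htrK.contDiffOn
      fun t ht ↦ (hode t ht).1.hasDerivWithinAt
  · exact tendsto_zero_of_hasDerivAt_riccati (tendsto_mul_of_isBigO_inv_pow le_rfl hKlO)
      (tendsto_mul_of_sub_div_isBigO hHO) (tendsto_mul_of_isBigO_inv_pow (by norm_num) htrKO)
      (eventually_atTop.2 ⟨ℓs, fun t ht ↦ (hode t ht).1⟩)
      (eventually_atTop.2 ⟨ℓs, fun t ht ↦ (hode t ht).2⟩)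
  · rw [((hode ℓs self_mem_Ici).1).deriv, hk₀, riccati_Hf_trKf_neg_one, hmots]

/-- Proposition 1: under the decay conditions and the sign condition
(`θ⁻ < 0` everywhere or `trK < 0` everywhere), a blow-up solution exists for any
outermost, finitely stable MOTS `ℓ*`, with moreover `∂_ℓ k(ℓ*) = 0`. -/
theorem blowup_exists_outermost_mots (ℓ₀ : ℝ) (R Kl KR : ℝ → ℝ)
    (hR : ContDiff ℝ (⊤ : ℕ∞) R)
    (hKl : ContDiff ℝ (⊤ : ℕ∞) Kl)
    (hKR : ContDiff ℝ (⊤ : ℕ∞) KR)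
    (hRpos : ∀ ℓ ∈ Set.Ici ℓ₀, 0 < R ℓ)
    (hdecay : JangDecay R Kl KR)
    (hsign : (∀ ℓ ∈ Set.Ici ℓ₀, thetaMinus R KR ℓ < 0) ∨
             (∀ ℓ ∈ Set.Ici ℓ₀, trKf Kl KR ℓ < 0))
    (ℓs : ℝ) (hℓs : ℓ₀ ≤ ℓs)
    (hmots : thetaPlus R KR ℓs = 0)
    (houtermost : ∀ ℓ, ℓs < ℓ → 0 < thetaPlus R KR ℓ)
    (hstable : ∃ m, 1 ≤ m ∧ 0 < iteratedDeriv m (thetaPlus R KR) ℓs) :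
    ∃ k : ℝ → ℝ, IsBlowupSolution R Kl KR ℓs k ∧ deriv k ℓs = 0 :=
  blowup_exists_outermost_mots_general ℓ₀ R Kl KR hR hKl hKR hRpos hdecay hsign ℓs hℓs hmots
    houtermost
end

section
/- (Proposition 2, blow-up at an inner MOTS.) Let ℓ₀ ∈ ℝ and let R, K_ℓ, K_R : [ℓ₀,∞) → ℝ be smooth with R > 0; set H = 2R'/R, θ⁺ = 2K_R + H, θ⁻ = 2K_R − H, trK = K_ℓ + 2K_R. Assume the decay conditions |R²/ℓ² − 1| = O(ℓ⁻¹), |H − 2/ℓ| = O(ℓ⁻²), |∂_ℓ H + 2/ℓ²| = O(ℓ⁻³), |K_ℓ|, |K_R| = O(ℓ⁻²), |∂_ℓ K_ℓ|, |∂_ℓ K_R| = O(ℓ⁻³), |trK| = O(ℓ⁻³), and that either θ⁻(ℓ) < 0 for all ℓ or trK(ℓ) < 0 for all ℓ. Suppose ℓ* is an outermost, finitely stable MOTS (θ⁺(ℓ*) = 0, θ⁺ > 0 on (ℓ*,∞), ∂_ℓ^m θ⁺(ℓ*) > 0 for some m ≥ 1), and suppose ℓ** with ℓ₀ ≤ ℓ**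 < ℓ* is another finitely stable MOTS with θ⁺(ℓ) > 0 for all ℓ ∈ (ℓ**, ℓ*). Then there exists a blow-up solution for ℓ**: a smooth solution k of ∂_ℓ k = −K_ℓ k² − H k + trK on [ℓ**,∞) with k(ℓ**) = −1, |k(ℓ)| < 1 for all ℓ > ℓ**, and k(ℓ) → 0 as ℓ → ∞. -/
open Filter Asymptotics Set Topology

open scoped NNReal ContDiff

/-!
Clamping the quadratic right-hand side of the Jang equation to `k ∈ [-1, 1]` makes it globally
Lipschitz in `k`, so the clamped equation has a global solution with `k(ℓ**) = -1`. At `k = -1`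
the field equals `θ⁺ ≥ 0`, and at `k = 1` it equals `θ⁻ < 0` (or at `k = 0` it equals `trK < 0`),
so the solution never leaves `[-1, 1]` and solves the Jang equation itself. Then `k + 1` and
`1 - k` solve linear equations with sources `θ⁺ ≥ 0` and `-θ⁻ ≥ 0`; since `θ⁺ > 0` on
`(ℓ**, ℓ*)`, an integrating factor makes both strictly positive after `ℓ**`. Finally `R²` is an
integrating factor for the `H k` term: `(R² k)' = R² (-K_ℓ k² + trK) = O(1)`, so `R² k = O(ℓ)`
and `k = O(ℓ⁻¹)`.
-/

section GlobalExistence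

variable {E : Type*} [NormedAddCommGroup E] [NormedSpace ℝ E] [CompleteSpace E]

theorem exists_isIntegralCurve_of_lipschitzWith_of_norm_le {f : ℝ → E → E} (t₀ : ℝ) (x₀ : E)
    (hcont : ∀ x, Continuous (f · x))
    (hlip : ∀ b : ℝ, ∃ K, ∀ t ∈ Icc (t₀ - b) (t₀ + b), LipschitzWith K (f t))
    (hbdd : ∀ b : ℝ, ∃ C : ℝ≥0, ∀ t ∈ Icc (t₀ - b) (t₀ + b), ∀ x, ‖f t x‖ ≤ C) :
    ∃ γ : ℝ → E, γ t₀ = x₀ ∧ IsIntegralCurve γ f := by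
  have hloc : ∀ b : ℝ, 0 < b → ∃ γ : ℝ → E, γ t₀ = x₀ ∧
      ∀ t ∈ Metric.ball t₀ b, HasDerivAt γ (f t (γ t)) t := by
    intro b hb
    obtain ⟨K, hK⟩ := hlip b
    obtain ⟨C, hC⟩ := hbdd b
    have hpl : IsPicardLindelof f (tmin := t₀ - b) (tmax := t₀ + b)
        ⟨t₀, by simp [hb.le]⟩ x₀ (C * b.toNNReal) 0 C K :=
      { lipschitzOnWith := fun t ht => (hK t ht).lipschitzOnWith
        continuousOn := fun x _ => (hcont x).continuousOn
        norm_le := fun t ht x _ => hC t ht x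
        mul_max_le := by simp [hb.le] }
    obtain ⟨γ, hγ₀, hγ⟩ := hpl.exists_eq_forall_mem_Icc_hasDerivWithinAt₀
    refine ⟨γ, hγ₀, fun t ht => ?_⟩
    rw [Real.ball_eq_Ioo] at ht
    exact (hγ t (Ioo_subset_Icc_self ht)).hasDerivAt (Icc_mem_nhds ht.1 ht.2)
  choose! γ hγ₀ hγ using hloc
  have hmono : ∀ b b', 0 < b → b ≤ b' → EqOn (γ b) (γ b') (Metric.ball t₀ b) := by
    intro b b' hb hbb'
    obtain ⟨K, hK⟩ := hlip b
    have hsub := Metric.ball_subset_ball (x := t₀) hbb'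
    simp only [Real.ball_eq_Ioo] at hsub ⊢
    refine ODE_solution_unique_of_mem_Ioo (s := fun _ => univ) (K := K)
      (fun t ht => (hK t (Ioo_subset_Icc_self ht)).lipschitzOnWith)
      (t₀ := t₀) ⟨by linarith, by linarith⟩
      (fun t ht => ⟨hγ b hb t (by rwa [Real.ball_eq_Ioo]), trivial⟩)
      (fun t ht => ⟨hγ b' (hb.trans_le hbb') t (by simpa only [Real.ball_eq_Ioo] using hsub ht),
        trivial⟩)
      (by rw [hγ₀ b hb, hγ₀ b' (hb.trans_le hbb')])
  have hglue : ∀ b, 0 < b → EqOn (fun t => γ (dist t t₀ + 1) t) (γ b) (Metric.ball t₀ b) := by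
    intro b hb s hs
    rcases le_total (dist s t₀ + 1) b with h | h
    · exact hmono _ b (by positivity) h (Metric.mem_ball.2 (lt_add_one _))
    · exact (hmono b _ hb h hs).symm
  refine ⟨fun t => γ (dist t t₀ + 1) t, by simpa using hγ₀ 1 one_pos, fun t => ?_⟩
  have ht : t ∈ Metric.ball t₀ (dist t t₀ + 1) := Metric.mem_ball.2 (lt_add_one _)
  exact (hγ _ (by positivity) t ht).congr_of_eventuallyEq
    (Filter.eventuallyEq_of_mem (Metric.isOpen_ball.mem_nhds ht) (hglue _ (by positivity)))

end GlobalExistence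

section Comparison

variable {k d g p q : ℝ → ℝ} {a b c : ℝ}

theorem monotoneOn_Icc_of_hasDerivAt_nonneg (hk : ContinuousOn k (Icc a b))
    (hk' : ∀ t ∈ Ioo a b, HasDerivAt k (d t) t) (hd : ∀ t ∈ Ioo a b, 0 ≤ d t) :
    MonotoneOn k (Icc a b) := by
  refine monotoneOn_of_hasDerivWithinAt_nonneg (f' := d) (convex_Icc a b) hk
    (fun t ht => ?_) (fun t ht => ?_)
  all_goals rw [interior_Icc] at ht
  exacts [(hk' t ht).hasDerivWithinAt, hd t ht]

theorem le_of_hasDerivAt_nonneg_below (hab : a ≤ b) (hk : ContinuousOn k (Icc a b))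
    (hk' : ∀ t ∈ Ioo a b, HasDerivAt k (d t) t) (hd : ∀ t ∈ Ioo a b, k t < c → 0 ≤ d t)
    (ha : c ≤ k a) : c ≤ k b := by
  by_contra! hb
  set S := Icc a b ∩ k ⁻¹' Ici c
  have hSbdd : BddAbove S := bddAbove_Icc.mono inter_subset_left
  have hs : sSup S ∈ S := (hk.preimage_isClosed_of_isClosed isClosed_Icc isClosed_Ici).csSup_mem
    ⟨a, left_mem_Icc.2 hab, ha⟩ hSbdd
  set s := sSup S
  have hbelow : ∀ t ∈ Ioc s b, k t < c := fun t ht =>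
    lt_of_not_ge fun h => ht.1.not_ge (le_csSup hSbdd ⟨⟨hs.1.1.trans ht.1.le, ht.2⟩, h⟩)
  have hmono : MonotoneOn k (Icc s b) :=
    monotoneOn_Icc_of_hasDerivAt_nonneg (hk.mono (Icc_subset_Icc_left hs.1.1))
      (fun t ht => hk' t ⟨hs.1.1.trans_lt ht.1, ht.2⟩)
      (fun t ht => hd t ⟨hs.1.1.trans_lt ht.1, ht.2⟩ (hbelow t (Ioo_subset_Ioc_self ht)))
  have hsb : s ≤ b := hs.1.2
  have : k s ≤ k b := hmono (left_mem_Icc.2 hsb) (right_mem_Icc.2 hsb) hsb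
  exact hb.not_ge (hs.2.trans this)

theorem pos_of_hasDerivAt_eq_add_mul (hab : a < b) (hg : ContinuousOn g (Icc a b))
    (hq : ContinuousOn q (Icc a b)) (hg' : ∀ t ∈ Ioo a b, HasDerivAt g (p t + q t * g t) t)
    (hp : ∀ t ∈ Ioo a b, 0 ≤ p t) (h : 0 < g a ∨ 0 ≤ g a ∧ ∃ c ∈ Ioo a b, 0 < p c) :
    0 < g b := by
  set A : ℝ → ℝ := fun t => ∫ s in a..t, q s
  have hA : ContinuousOn A (Icc a b) := by
    have := intervalIntegral.continuousOn_primitive_interval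
      (hq.integrableOn_Icc (μ := MeasureTheory.volume).mono_set (uIcc_of_le hab.le).subset)
    rwa [uIcc_of_le hab.le] at this
  have hA' : ∀ t ∈ Ioo a b, HasDerivAt A (q t) t := fun t ht =>
    intervalIntegral.integral_hasDerivAt_right
      ((hq.mono (Icc_subset_Icc_right ht.2.le)).intervalIntegrable_of_Icc ht.1.le)
      ((hq.mono Ioo_subset_Icc_self).stronglyMeasurableAtFilter isOpen_Ioo t ht)
      (hq.continuousAt (Icc_mem_nhds ht.1 ht.2))
  set φ : ℝ → ℝ := fun t => g t * Real.exp (-A t)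
  have hφ' : ∀ t ∈ Ioo a b, HasDerivAt φ (p t * Real.exp (-A t)) t := fun t ht => by
    refine ((hg' t ht).mul (hA' t ht).neg.exp).congr_deriv ?_
    simp only [Pi.neg_apply]
    ring
  have hφ : MonotoneOn φ (Icc a b) :=
    monotoneOn_Icc_of_hasDerivAt_nonneg (hg.mul hA.neg.rexp) hφ'
      (fun t ht => mul_nonneg (hp t ht) (Real.exp_pos _).le)
  have hφa : φ a = g a := by simp [φ, A]
  have hφb : ∀ t ∈ Icc a b, φ t ≤ φ b := fun t ht => hφ ht (right_mem_Icc.2 hab.le) ht.2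
  suffices 0 < φ b from pos_of_mul_pos_left this (Real.exp_pos _).le
  rcases h with hga | ⟨hga, c, hc, hpc⟩
  · exact (hφa ▸ hga).trans_le (hφb a (left_mem_Icc.2 hab.le))
  by_contra! hφb0
  have hzero : EqOn φ 0 (Icc a b) := fun t ht =>
    le_antisymm ((hφb t ht).trans hφb0)
      (hφa ▸ hga |>.trans (hφ (left_mem_Icc.2 hab.le) ht ht.1))
  have h0 : HasDerivAt φ 0 c := (hasDerivAt_const c (0 : ℝ)).congr_of_eventuallyEq
    (Filter.eventuallyEq_of_mem (Icc_mem_nhds hc.1 hc.2) hzero)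
  exact (mul_pos hpc (Real.exp_pos _)).ne' ((hφ' c hc).unique h0)

end Comparison

theorem contDiffOn_infty_of_hasDerivAt {k f : ℝ → ℝ} {s : Set ℝ} (hs : UniqueDiffOn ℝ s)
    (hk : ∀ t ∈ s, HasDerivAt k (f t) t)
    (hf : ∀ n : ℕ, ContDiffOn ℝ n k s → ContDiffOn ℝ n f s) : ContDiffOn ℝ ∞ k s := by
  refine contDiffOn_infty.2 fun n => ?_
  induction n with
  | zero => exact contDiffOn_zero.2 (HasDerivAt.continuousOn hk)
  | succ n ih =>
    rw [Nat.cast_succ, contDiffOn_succ_iff_derivWithin hs]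
    exact ⟨fun t ht => (hk t ht).differentiableAt.differentiableWithinAt, fun h => by simp at h,
      (hf n ih).congr fun t ht => (hk t ht).hasDerivWithinAt.derivWithin (hs t ht)⟩

theorem isBigO_id_of_hasDerivAt {m d : ℝ → ℝ}
    (hm : ∀ᶠ t in atTop, HasDerivAt m (d t) t) (hd : d =O[atTop] fun _ => (1 : ℝ)) :
    m =O[atTop] id := by
  obtain ⟨C, hC⟩ := hd.bound
  obtain ⟨T, hT⟩ := eventually_atTop.1 (hm.and hC)
  refine IsBigO.of_bound (|m T| + |C| * (|T| + 1)) ?_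
  filter_upwards [eventually_ge_atTop (max T 1)] with t ht
  have hTt : T ≤ t := (le_max_left _ _).trans ht
  have h1t : 1 ≤ t := (le_max_right _ _).trans ht
  have hmvt : ‖m t - m T‖ ≤ C * (t - T) := by
    have := norm_image_sub_le_of_norm_deriv_le_segment'
      (f' := d) (C := C) (fun x hx => (hT x hx.1).1.hasDerivWithinAt)
      (fun x hx => by simpa using (hT x hx.1).2) t (right_mem_Icc.2 hTt)
    simpa using this
  rw [Real.norm_eq_abs] at hmvt
  rw [Real.norm_eq_abs, id, Real.norm_eq_abs, abs_of_pos (by linarith : (0:ℝ) < t)]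
  have hmt : |m t| ≤ |m T| + C * (t - T) := by
    linarith [abs_sub_abs_le_abs_sub (m t) (m T)]
  have hCt : C * (t - T) ≤ |C| * ((|T| + 1) * t) :=
    calc C * (t - T) ≤ |C| * (t - T) := mul_le_mul_of_nonneg_right (le_abs_self C) (by linarith)
      _ ≤ |C| * ((|T| + 1) * t) := by
        gcongr; nlinarith [neg_abs_le T, mul_le_mul_of_nonneg_left h1t (abs_nonneg T)]
  nlinarith [abs_nonneg (m T)]

theorem tendsto_zero_of_hasDerivAt_mul {w k d : ℝ → ℝ}
    (hw : Tendsto (fun ℓ => w ℓ / ℓ ^ 2) atTop (𝓝 1))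
    (hm : ∀ᶠ ℓ in atTop, HasDerivAt (fun ℓ => w ℓ * k ℓ) (d ℓ) ℓ)
    (hd : d =O[atTop] fun _ => (1 : ℝ)) : Tendsto k atTop (𝓝 0) := by
  have hwk : (fun ℓ => w ℓ * k ℓ) =O[atTop] id := isBigO_id_of_hasDerivAt hm hd
  have hw0 : ∀ᶠ ℓ in atTop, w ℓ ≠ 0 :=
    (hw.eventually_ne one_ne_zero).mono fun ℓ h => (div_ne_zero_iff.1 h).1
  have hwinv : (fun ℓ => (w ℓ)⁻¹) =O[atTop] fun ℓ => (ℓ ^ 2)⁻¹ := by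
    refine (((hw.inv₀ one_ne_zero).isBigO_one ℝ).mul
      (isBigO_refl (fun ℓ : ℝ => (ℓ ^ 2)⁻¹) atTop)).congr' ?_ (by simp)
    filter_upwards [eventually_ne_atTop 0] with ℓ hℓ
    field_simp
  have hk : k =O[atTop] fun ℓ => ℓ⁻¹ := by
    refine (hwk.mul hwinv).congr' ?_ ?_
    · filter_upwards [hw0] with ℓ hℓ
      field_simp
    · filter_upwards [eventually_ne_atTop 0] with ℓ hℓ
      simp only [id]
      field_simp
  exact hk.trans_tendsto tendsto_inv_atTop_zero

noncomputable def jangField (R Kl KR : ℝ → ℝ) (ℓ x : ℝ) : ℝ :=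
  -(Kl ℓ) * x ^ 2 - Hf R ℓ * x + trKf Kl KR ℓ

noncomputable def clampUnit (x : ℝ) : ℝ := projIcc (-1) 1 (by norm_num) x

lemma clampUnit_mem (x : ℝ) : clampUnit x ∈ Icc (-1) 1 := (projIcc _ _ _ x).2

lemma clampUnit_of_mem {x : ℝ} (hx : x ∈ Icc (-1) 1) : clampUnit x = x := by
  simp [clampUnit, projIcc_of_mem _ hx]

lemma clampUnit_of_le {x : ℝ} (hx : x ≤ -1) : clampUnit x = -1 := by
  simp [clampUnit, projIcc_of_le_left _ hx]

lemma lipschitzWith_clampUnit : LipschitzWith 1 clampUnit := by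
  have := (LipschitzWith.subtype_val _).comp (LipschitzWith.projIcc (by norm_num : (-1 : ℝ) ≤ 1))
  rwa [mul_one] at this

section JangField

variable {R Kl KR : ℝ → ℝ}

lemma jangField_neg_one (ℓ : ℝ) : jangField R Kl KR ℓ (-1) = thetaPlus R KR ℓ := by
  simp only [jangField, thetaPlus, trKf]; ring

lemma jangField_zero (ℓ : ℝ) : jangField R Kl KR ℓ 0 = trKf Kl KR ℓ := by
  simp [jangField]

lemma jangField_one (ℓ : ℝ) : jangField R Kl KR ℓ 1 = thetaMinus R KR ℓ := by
  simp only [jangField, thetaMinus, trKf]; ring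

lemma jangField_eq_thetaPlus_add_mul (ℓ x : ℝ) :
    jangField R Kl KR ℓ x = thetaPlus R KR ℓ + (-(Kl ℓ) * (x - 1) - Hf R ℓ) * (x + 1) := by
  simp only [jangField, thetaPlus, trKf]; ring

lemma jangField_eq_thetaMinus_add_mul (ℓ x : ℝ) :
    jangField R Kl KR ℓ x = thetaMinus R KR ℓ + (-(Kl ℓ) * (x + 1) - Hf R ℓ) * (x - 1) := by
  simp only [jangField, thetaMinus, trKf]; ring

lemma abs_jangField_sub_le {ℓ x y : ℝ} (hx : x ∈ Icc (-1) 1) (hy : y ∈ Icc (-1) 1) :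
    |jangField R Kl KR ℓ x - jangField R Kl KR ℓ y| ≤ (2 * |Kl ℓ| + |Hf R ℓ|) * |x - y| := by
  have hxy : jangField R Kl KR ℓ x - jangField R Kl KR ℓ y
      = (-(Kl ℓ) * (x + y) - Hf R ℓ) * (x - y) := by simp only [jangField]; ring
  rw [hxy, abs_mul]
  gcongr
  calc |-(Kl ℓ) * (x + y) - Hf R ℓ| ≤ |Kl ℓ| * |x + y| + |Hf R ℓ| := by
        simpa [abs_mul] using abs_sub (-(Kl ℓ) * (x + y)) (Hf R ℓ)
    _ ≤ |Kl ℓ| * 2 + |Hf R ℓ| := by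
        gcongr; exact abs_le.2 ⟨by linarith [hx.1, hy.1], by linarith [hx.2, hy.2]⟩
    _ = 2 * |Kl ℓ| + |Hf R ℓ| := by ring

lemma abs_jangField_le {ℓ x : ℝ} (hx : x ∈ Icc (-1) 1) :
    |jangField R Kl KR ℓ x| ≤ |Kl ℓ| + |Hf R ℓ| + |trKf Kl KR ℓ| := by
  have hx1 : |x| ≤ 1 := abs_le.2 hx
  have hx2 : |x| ^ 2 ≤ 1 := pow_le_one₀ (abs_nonneg x) hx1
  calc |jangField R Kl KR ℓ x| ≤ |Kl ℓ| * |x| ^ 2 + |Hf R ℓ| * |x| + |trKf Kl KR ℓ| := by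
        simp only [jangField]
        refine (abs_add_le _ _).trans ?_
        gcongr
        have := abs_sub (-(Kl ℓ) * x ^ 2) (Hf R ℓ * x)
        rwa [abs_mul, abs_mul, abs_neg, abs_pow] at this
    _ ≤ |Kl ℓ| + |Hf R ℓ| + |trKf Kl KR ℓ| := by
        gcongr
        · exact mul_le_of_le_one_right (abs_nonneg _) hx2
        · exact mul_le_of_le_one_right (abs_nonneg _) hx1

end JangField

section JangSolutions

variable {R Kl KR k : ℝ → ℝ} {a b : ℝ}

theorem exists_hasDerivAt_jangField_clampUnit (x₀ : ℝ) (hKl : ContinuousOn Kl (Ici a))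
    (hH : ContinuousOn (Hf R) (Ici a)) (htrK : ContinuousOn (trKf Kl KR) (Ici a)) :
    ∃ k : ℝ → ℝ, k a = x₀ ∧
      ∀ t ∈ Ici a, HasDerivAt k (jangField R Kl KR t (clampUnit (k t))) t := by
  -- the coefficients are only given on `[a, ∞)`, so before `a` they are frozen at time `a`
  have hmax : Continuous fun t => max t a := continuous_id.max continuous_const
  have hmem : ∀ t, max t a ∈ Ici a := fun t => le_max_right t a
  have hKl' := hKl.comp_continuous hmax hmem
  have hH' := hH.comp_continuous hmax hmem
  have htrK' := htrK.comp_continuous hmax hmem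
  have hM : ∀ b : ℝ, ∃ M, ∀ t ∈ Icc (a - b) (a + b),
      |Kl (max t a)| + |Hf R (max t a)| + |trKf Kl KR (max t a)| ≤ M := fun b => by
    obtain ⟨M, hM⟩ := isCompact_Icc.exists_bound_of_continuousOn
      ((hKl'.abs.add hH'.abs).add htrK'.abs).continuousOn (s := Icc (a - b) (a + b))
    exact ⟨M, fun t ht => (le_abs_self _).trans (hM t ht)⟩
  obtain ⟨k, hk₀, hk⟩ := exists_isIntegralCurve_of_lipschitzWith_of_norm_le
    (f := fun t x => jangField R Kl KR (max t a) (clampUnit x)) a x₀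
    (fun x => ((hKl'.neg.mul continuous_const).sub (hH'.mul continuous_const)).add htrK')
    (fun b => by
      obtain ⟨M, hM⟩ := hM b
      refine ⟨(2 * M).toNNReal, fun t ht => LipschitzWith.of_dist_le_mul fun x y => ?_⟩
      have hcl : |clampUnit x - clampUnit y| ≤ |x - y| := by
        simpa [Real.dist_eq] using lipschitzWith_clampUnit.dist_le_mul x y
      have hMt := hM t ht
      rw [Real.dist_eq, Real.dist_eq]
      refine (abs_jangField_sub_le (clampUnit_mem x) (clampUnit_mem y)).trans ?_
      gcongr
      refine le_trans ?_ (Real.le_coe_toNNReal _)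
      linarith [abs_nonneg (Hf R (max t a)), abs_nonneg (trKf Kl KR (max t a))])
    (fun b => by
      obtain ⟨M, hM⟩ := hM b
      exact ⟨M.toNNReal, fun t ht x => (abs_jangField_le (clampUnit_mem x)).trans
        ((hM t ht).trans (Real.le_coe_toNNReal M))⟩)
  exact ⟨k, hk₀, fun t ht => by simpa [max_eq_left (mem_Ici.1 ht)] using hk t⟩

theorem neg_one_le_of_hasDerivAt_jangField_clampUnit
    (hk : ∀ t ∈ Ici a, HasDerivAt k (jangField R Kl KR t (clampUnit (k t))) t)
    (hθ : ∀ t ∈ Ici a, 0 ≤ thetaPlus R KR t) (ha : -1 ≤ k a) : ∀ t ∈ Ici a, -1 ≤ k t :=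
  fun t ht => le_of_hasDerivAt_nonneg_below ht
    (HasDerivAt.continuousOn fun s hs => hk s hs.1) (fun s hs => hk s hs.1.le)
    (fun s hs hks => by
      rw [clampUnit_of_le hks.le, jangField_neg_one]; exact hθ s hs.1.le) ha

theorem le_of_hasDerivAt_jangField_clampUnit {c : ℝ} (hc : c ∈ Icc (-1) 1)
    (hk : ∀ t ∈ Ici a, HasDerivAt k (jangField R Kl KR t (clampUnit (k t))) t)
    (hneg : ∀ t ∈ Ici a, jangField R Kl KR t c < 0) (ha : k a ≤ c) : ∀ t ∈ Ici a, k t ≤ c :=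
  fun t ht => image_le_of_deriv_right_lt_deriv_boundary (B := fun _ => c)
    (HasDerivAt.continuousOn fun s hs => hk s hs.1) (fun s hs => (hk s hs.1).hasDerivWithinAt)
    ha (fun _ => hasDerivAt_const _ c)
    (fun s hs hks => by rw [hks, clampUnit_of_mem hc]; exact hneg s hs.1) ⟨ht, le_rfl⟩

theorem neg_one_lt_of_hasDerivAt_jangField (hab : a < b) (hKl : ContinuousOn Kl (Icc a b))
    (hH : ContinuousOn (Hf R) (Icc a b))
    (hk : ∀ t ∈ Icc a b, HasDerivAt k (jangField R Kl KR t (k t)) t)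
    (hθ : ∀ t ∈ Ioo a b, 0 ≤ thetaPlus R KR t) (hθc : ∃ c ∈ Ioo a b, 0 < thetaPlus R KR c)
    (ha : -1 ≤ k a) : -1 < k b := by
  have hkc : ContinuousOn k (Icc a b) := HasDerivAt.continuousOn hk
  have := pos_of_hasDerivAt_eq_add_mul (g := fun t => k t + 1)
    (q := fun t => -(Kl t) * (k t - 1) - Hf R t) hab
    (hkc.add continuousOn_const) ((hKl.neg.mul (hkc.sub continuousOn_const)).sub hH)
    (fun t ht => ((hk t (Ioo_subset_Icc_self ht)).add_const 1).congr_deriv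
      (jangField_eq_thetaPlus_add_mul _ _))
    hθ (Or.inr ⟨by linarith, hθc⟩)
  linarith

theorem lt_one_of_hasDerivAt_jangField_of_thetaMinus_nonpos (hab : a < b)
    (hKl : ContinuousOn Kl (Icc a b)) (hH : ContinuousOn (Hf R) (Icc a b))
    (hk : ∀ t ∈ Icc a b, HasDerivAt k (jangField R Kl KR t (k t)) t)
    (hθ : ∀ t ∈ Ioo a b, thetaMinus R KR t ≤ 0) (ha : k a < 1) : k b < 1 := by
  have hkc : ContinuousOn k (Icc a b) := HasDerivAt.continuousOn hk
  have := pos_of_hasDerivAt_eq_add_mul (g := fun t => 1 - k t) (p := fun t => -thetaMinus R KR t)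
    (q := fun t => -(Kl t) * (k t + 1) - Hf R t)
    hab (continuousOn_const.sub hkc) ((hKl.neg.mul (hkc.add continuousOn_const)).sub hH)
    (fun t ht => ((hk t (Ioo_subset_Icc_self ht)).const_sub 1).congr_deriv
      (by rw [jangField_eq_thetaMinus_add_mul]; ring))
    (fun t ht => neg_nonneg.2 (hθ t ht)) (Or.inl (by linarith))
  linarith

theorem lt_one_of_hasDerivAt_jangField_clampUnit (hKl : ContinuousOn Kl (Ici a))
    (hH : ContinuousOn (Hf R) (Ici a))
    (hk : ∀ t ∈ Ici a, HasDerivAt k (jangField R Kl KR t (clampUnit (k t))) t)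
    (hlow : ∀ t ∈ Ici a, -1 ≤ k t) (ha : k a = -1)
    (hsign : (∀ t ∈ Ici a, thetaMinus R KR t < 0) ∨ (∀ t ∈ Ici a, trKf Kl KR t < 0)) :
    ∀ t ∈ Ioi a, k t < 1 := by
  rcases hsign with hθ | htrK
  · have hle := le_of_hasDerivAt_jangField_clampUnit ⟨by norm_num, le_rfl⟩ hk
      (fun t ht => jangField_one (Kl := Kl) t ▸ hθ t ht) (by rw [ha]; norm_num)
    intro t ht
    refine lt_one_of_hasDerivAt_jangField_of_thetaMinus_nonpos ht (hKl.mono Icc_subset_Ici_self)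
      (hH.mono Icc_subset_Ici_self) (fun s hs => ?_) (fun s hs => (hθ s hs.1.le).le)
      (by rw [ha]; norm_num)
    simpa only [clampUnit_of_mem ⟨hlow s hs.1, hle s hs.1⟩] using hk s hs.1
  · have hle := le_of_hasDerivAt_jangField_clampUnit ⟨by norm_num, zero_le_one⟩ hk
      (fun t ht => jangField_zero (R := R) t ▸ htrK t ht) (by rw [ha]; norm_num)
    exact fun t ht => (hle t (mem_Ici.2 (le_of_lt ht))).trans_lt one_pos

theorem contDiffOn_Hf_s9 {n : WithTop ℕ∞} {s : Set ℝ} (hR : ContDiff ℝ (n + 1) R)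
    (hR0 : ∀ t ∈ s, R t ≠ 0) : ContDiffOn ℝ n (Hf R) s :=
  (contDiffOn_const.mul (contDiff_succ_iff_deriv.1 hR).2.2.contDiffOn).div
    (hR.of_le le_self_add).contDiffOn hR0

theorem contDiffOn_of_hasDerivAt_jangField {s : Set ℝ} (hs : UniqueDiffOn ℝ s)
    (hR : ContDiff ℝ ∞ R) (hKl : ContDiff ℝ ∞ Kl) (hKR : ContDiff ℝ ∞ KR)
    (hR0 : ∀ t ∈ s, R t ≠ 0) (hk : ∀ t ∈ s, HasDerivAt k (jangField R Kl KR t (k t)) t) :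
    ContDiffOn ℝ ∞ k s := by
  refine contDiffOn_infty_of_hasDerivAt hs hk fun n hkn => ?_
  have hH : ContDiffOn ℝ n (Hf R) s := contDiffOn_infty.1 (contDiffOn_Hf_s9 hR hR0) n
  have hKl' : ContDiffOn ℝ n Kl s := (contDiff_infty.1 hKl n).contDiffOn
  have hKR' : ContDiffOn ℝ n KR s := (contDiff_infty.1 hKR n).contDiffOn
  exact ((hKl'.neg.mul (hkn.pow 2)).sub (hH.mul hkn)).add (hKl'.add (contDiffOn_const.mul hKR'))

theorem hasDerivAt_sq_mul_of_hasDerivAt_jangField {ℓ : ℝ} (hR : DifferentiableAt ℝ R ℓ)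
    (hR0 : R ℓ ≠ 0) (hk : HasDerivAt k (jangField R Kl KR ℓ (k ℓ)) ℓ) :
    HasDerivAt (fun ℓ => R ℓ ^ 2 * k ℓ) (R ℓ ^ 2 * (-(Kl ℓ) * k ℓ ^ 2 + trKf Kl KR ℓ)) ℓ := by
  refine ((hR.hasDerivAt.pow 2).mul hk).congr_deriv ?_
  simp only [jangField, Hf, Pi.pow_apply]
  field_simp
  ring

theorem tendsto_zero_of_hasDerivAt_jangField
    (hR2 : (fun ℓ => R ℓ ^ 2 / ℓ ^ 2 - 1) =O[atTop] fun ℓ => ℓ⁻¹)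
    (hKl : Kl =O[atTop] fun ℓ => (ℓ ^ 2)⁻¹) (htrK : trKf Kl KR =O[atTop] fun ℓ => (ℓ ^ 3)⁻¹)
    (hR : ∀ᶠ ℓ in atTop, DifferentiableAt ℝ R ℓ ∧ R ℓ ≠ 0)
    (hk : ∀ᶠ ℓ in atTop, HasDerivAt k (jangField R Kl KR ℓ (k ℓ)) ℓ ∧ |k ℓ| ≤ 1) :
    Tendsto k atTop (𝓝 0) := by
  have hw : Tendsto (fun ℓ => R ℓ ^ 2 / ℓ ^ 2) atTop (𝓝 1) := by
    simpa using (hR2.trans_tendsto tendsto_inv_atTop_zero).add_const 1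
  refine tendsto_zero_of_hasDerivAt_mul hw ((hR.and hk).mono fun ℓ h =>
    hasDerivAt_sq_mul_of_hasDerivAt_jangField h.1.1 h.1.2 h.2.1) ?_
  have hRsq : (fun ℓ => R ℓ ^ 2) =O[atTop] fun ℓ => ℓ ^ 2 := by
    refine ((hw.isBigO_one ℝ).mul (isBigO_refl (fun ℓ : ℝ => ℓ ^ 2) atTop)).congr' ?_ (by simp)
    filter_upwards [eventually_ne_atTop 0] with ℓ hℓ
    field_simp
  have hksq : (fun ℓ => k ℓ ^ 2) =O[atTop] fun _ => (1 : ℝ) := by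
    refine IsBigO.of_bound 1 (hk.mono fun ℓ h => ?_)
    simpa using h.2
  have hcube : (fun ℓ : ℝ => (ℓ ^ 3)⁻¹) =O[atTop] fun ℓ => (ℓ ^ 2)⁻¹ := by
    refine IsBigO.of_bound 1 ?_
    filter_upwards [eventually_ge_atTop 1] with ℓ hℓ
    have h1 : 1 ≤ ‖ℓ‖ := hℓ.trans (le_abs_self ℓ)
    rw [one_mul, norm_inv, norm_inv, norm_pow, norm_pow]
    exact inv_anti₀ (by positivity) (pow_le_pow_right₀ h1 (by norm_num))
  have hrest : (fun ℓ => -(Kl ℓ) * k ℓ ^ 2 + trKf Kl KR ℓ) =O[atTop] fun ℓ => (ℓ ^ 2)⁻¹ :=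
    ((hKl.neg_left.mul hksq).congr_right (by simp)).add (htrK.trans hcube)
  refine (hRsq.mul hrest).trans (IsBigO.of_bound 1 ?_)
  filter_upwards [eventually_ne_atTop 0] with ℓ hℓ
  simp [hℓ]

theorem exists_hasDerivAt_jangField_abs_lt_one (hKl : ContinuousOn Kl (Ici a))
    (hH : ContinuousOn (Hf R) (Ici a)) (htrK : ContinuousOn (trKf Kl KR) (Ici a))
    (hθ : ∀ t ∈ Ici a, 0 ≤ thetaPlus R KR t)
    (hθpos : ∀ b ∈ Ioi a, ∃ c ∈ Ioo a b, 0 < thetaPlus R KR c)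
    (hsign : (∀ t ∈ Ici a, thetaMinus R KR t < 0) ∨ (∀ t ∈ Ici a, trKf Kl KR t < 0)) :
    ∃ k : ℝ → ℝ, k a = -1 ∧ (∀ t ∈ Ici a, HasDerivAt k (jangField R Kl KR t (k t)) t) ∧
      ∀ t ∈ Ioi a, |k t| < 1 := by
  obtain ⟨k, hk₀, hk⟩ := exists_hasDerivAt_jangField_clampUnit (-1) hKl hH htrK
  have hlow := neg_one_le_of_hasDerivAt_jangField_clampUnit hk hθ hk₀.ge
  have hupp := lt_one_of_hasDerivAt_jangField_clampUnit hKl hH hk hlow hk₀ hsign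
  have hjang : ∀ t ∈ Ici a, HasDerivAt k (jangField R Kl KR t (k t)) t := fun t ht => by
    refine clampUnit_of_mem ⟨hlow t ht, ?_⟩ ▸ hk t ht
    rcases (mem_Ici.1 ht).eq_or_lt with rfl | h
    exacts [hk₀ ▸ by norm_num, (hupp t h).le]
  refine ⟨k, hk₀, hjang, fun t ht => abs_lt.2 ⟨?_, hupp t ht⟩⟩
  exact neg_one_lt_of_hasDerivAt_jangField ht (hKl.mono Icc_subset_Ici_self)
    (hH.mono Icc_subset_Ici_self) (fun s hs => hjang s hs.1) (fun s hs => hθ s hs.1.le)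
    (hθpos t ht) hk₀.ge

end JangSolutions

theorem blowup_exists_inner_mots_general (ℓ₀ : ℝ) (R Kl KR : ℝ → ℝ)
    (hR : ContDiff ℝ (⊤ : ℕ∞) R)
    (hKl : ContDiff ℝ (⊤ : ℕ∞) Kl)
    (hKR : ContDiff ℝ (⊤ : ℕ∞) KR)
    (hRpos : ∀ ℓ ∈ Set.Ici ℓ₀, 0 < R ℓ)
    (hdecay : JangDecay R Kl KR)
    (hsign : (∀ ℓ ∈ Set.Ici ℓ₀, thetaMinus R KR ℓ < 0) ∨
             (∀ ℓ ∈ Set.Ici ℓ₀, trKf Kl KR ℓ < 0))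
    (ℓs : ℝ)
    (hmots : thetaPlus R KR ℓs = 0)
    (houtermost : ∀ ℓ, ℓs < ℓ → 0 < thetaPlus R KR ℓ)
    (ℓss : ℝ) (hℓss₀ : ℓ₀ ≤ ℓss) (hℓss : ℓss < ℓs)
    (hmots' : thetaPlus R KR ℓss = 0)
    (hbetween : ∀ ℓ ∈ Set.Ioo ℓss ℓs, 0 < thetaPlus R KR ℓ) :
    ∃ k : ℝ → ℝ, IsBlowupSolution R Kl KR ℓss k := by
  obtain ⟨hR2, -, -, hKl2, -, -, -, htrK3⟩ := hdecay
  have hsub : Ici ℓss ⊆ Ici ℓ₀ := Ici_subset_Ici.2 hℓss₀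
  have hR0 : ∀ t ∈ Ici ℓss, R t ≠ 0 := fun t ht => (hRpos t (hsub ht)).ne'
  have hH : ContinuousOn (Hf R) (Ici ℓss) := (contDiffOn_Hf_s9 (n := ∞) hR hR0).continuousOn
  have htrK : Continuous (trKf Kl KR) := hKl.continuous.add (continuous_const.mul hKR.continuous)
  have hθ : ∀ t ∈ Ici ℓss, 0 ≤ thetaPlus R KR t := fun t ht => by
    rcases (mem_Ici.1 ht).eq_or_lt with rfl | h
    · exact hmots'.ge
    rcases lt_trichotomy t ℓs with h' | rfl | h'
    exacts [(hbetween t ⟨h, h'⟩).le, hmots.ge, (houtermost t h').le]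
  have hθpos : ∀ b ∈ Ioi ℓss, ∃ c ∈ Ioo ℓss b, 0 < thetaPlus R KR c := fun b hb => by
    have := lt_min (mem_Ioi.1 hb) hℓss
    refine ⟨(ℓss + min b ℓs) / 2, ?_, hbetween _ ?_⟩ <;> constructor <;>
      linarith [min_le_left b ℓs, min_le_right b ℓs]
  obtain ⟨k, hk₀, hjang, hlt⟩ := exists_hasDerivAt_jangField_abs_lt_one
    hKl.continuous.continuousOn hH htrK.continuousOn hθ hθpos
    (hsign.imp (fun h t ht => h t (hsub ht)) (fun h t ht => h t (hsub ht)))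
  refine ⟨k, contDiffOn_of_hasDerivAt_jangField (uniqueDiffOn_Ici ℓss) hR hKl hKR hR0 hjang,
    hjang, hk₀, hlt, ?_⟩
  refine tendsto_zero_of_hasDerivAt_jangField hR2 hKl2 htrK3 ?_ ?_ <;>
    filter_upwards [eventually_gt_atTop ℓss] with t ht
  exacts [⟨hR.differentiable (by simp) t, hR0 t ht.le⟩, ⟨hjang t ht.le, (hlt t ht).le⟩]

/-- Proposition 2: under the decay conditions and the sign condition, if `ℓ*` is an
outermost, finitely stable MOTS and `ℓ** < ℓ*` is another finitely stable MOTS which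
is outermost in `[ℓ**, ℓ*)`, then a blow-up solution exists for `ℓ**`. -/
theorem blowup_exists_inner_mots (ℓ₀ : ℝ) (R Kl KR : ℝ → ℝ)
    (hR : ContDiff ℝ (⊤ : ℕ∞) R)
    (hKl : ContDiff ℝ (⊤ : ℕ∞) Kl)
    (hKR : ContDiff ℝ (⊤ : ℕ∞) KR)
    (hRpos : ∀ ℓ ∈ Set.Ici ℓ₀, 0 < R ℓ)
    (hdecay : JangDecay R Kl KR)
    (hsign : (∀ ℓ ∈ Set.Ici ℓ₀, thetaMinus R KR ℓ < 0) ∨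
             (∀ ℓ ∈ Set.Ici ℓ₀, trKf Kl KR ℓ < 0))
    (ℓs : ℝ) (hℓs : ℓ₀ ≤ ℓs)
    (hmots : thetaPlus R KR ℓs = 0)
    (houtermost : ∀ ℓ, ℓs < ℓ → 0 < thetaPlus R KR ℓ)
    (hstable : ∃ m, 1 ≤ m ∧ 0 < iteratedDeriv m (thetaPlus R KR) ℓs)
    (ℓss : ℝ) (hℓss₀ : ℓ₀ ≤ ℓss) (hℓss : ℓss < ℓs)
    (hmots' : thetaPlus R KR ℓss = 0)
    (hbetween : ∀ ℓ ∈ Set.Ioo ℓss ℓs, 0 < thetaPlus R KR ℓ)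
    (hstable' : ∃ m, 1 ≤ m ∧ 0 < iteratedDeriv m (thetaPlus R KR) ℓss) :
    ∃ k : ℝ → ℝ, IsBlowupSolution R Kl KR ℓss k :=
  blowup_exists_inner_mots_general ℓ₀ R Kl KR hR hKl hKR hRpos hdecay hsign ℓs hmots houtermost ℓss
    hℓss₀ hℓss hmots' hbetween
end

section
/- (Corollary 1.) There exist ℓ₀ ∈ ℝ and smooth functions R, K_ℓ, K_R : [ℓ₀,∞) → ℝ with R > 0 satisfying the decay conditions |R²/ℓ² − 1| = O(ℓ⁻¹), |H − 2/ℓ| = O(ℓ⁻²), |∂_ℓ H + 2/ℓ²| = O(ℓ⁻³), |K_ℓ|, |K_R| = O(ℓ⁻²), |∂_ℓ K_ℓ|, |∂_ℓ K_R| = O(ℓ⁻³), |trK| = O(ℓ⁻³), together with points ℓ** < ℓ' in [ℓ₀,∞) such that: ℓ** is a finitely stable MOTS (θ⁺(ℓ**) = 0 and ∂_ℓ^m θ⁺(ℓ**) > 0 for some m ≥ 1), θ⁺(ℓ') < 0 (ℓ' is a strictly outer trapped surface enclosing ℓ**), and there exists a blow-up solution for ℓ**. -/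
open Filter Asymptotics Set Topology

/-!
Take `K_ℓ = 0` and `R = √(ℓ² + 1)`, so that `H = 2ℓ/(ℓ² + 1)` and the Jang equation becomes
linear: `((ℓ² + 1)(1 + k))' = (ℓ² + 1) θ⁺`. Prescribing the solution
`k = -(5ℓ⁴ + ℓ² + 1)/(ℓ² + 1)³` and reading `K_R` off the equation gives
`K_R = ℓ(1 - 9ℓ²)/(ℓ² + 1)⁴` and `θ⁺ = 2ℓ(ℓ² - 1)(ℓ⁴ + 4ℓ² - 2)/(ℓ² + 1)⁴`.
So `ℓ = 0` is a MOTS with `∂_ℓ θ⁺(0) = 4`, the spheres with `√6 - 2 < ℓ² < 1` are strictly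
outer trapped, and `k` is a blow-up solution for `ℓ = 0` because
`(ℓ² + 1)³ - (5ℓ⁴ + ℓ² + 1) = ℓ²((ℓ² - 1)² + 1)`. Every decay condition is a comparison of
degrees of the numerator and denominator of a rational function.
-/

open Polynomial

theorem Polynomial.isBigO_atTop_div_inv_pow {f : ℝ → ℝ} (P Q : ℝ[X]) {m : ℕ}
    (hf : f =ᶠ[atTop] fun x => P.eval x / Q.eval x) (hdeg : P.natDegree + m ≤ Q.natDegree) :
    f =O[atTop] fun x => (x ^ m)⁻¹ := by
  refine hf.trans_isBigO <| (isEquivalent_atTop_div P Q).isBigO.trans <|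
    (isBigO_const_mul_self _ _ _).trans (IsBigO.of_bound 1 ?_)
  filter_upwards [eventually_ge_atTop 1] with x hx
  have hx0 : 0 ≤ x := zero_le_one.trans hx
  rw [← zpow_natCast, ← zpow_neg, Real.norm_of_nonneg (zpow_nonneg hx0 _),
    Real.norm_of_nonneg (zpow_nonneg hx0 _), one_mul]
  exact zpow_le_zpow_right₀ hx (by omega)

namespace JangExample

noncomputable def radius (ℓ : ℝ) : ℝ := √(ℓ ^ 2 + 1)

noncomputable def KR (ℓ : ℝ) : ℝ := ℓ * (1 - 9 * ℓ ^ 2) / (ℓ ^ 2 + 1) ^ 4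

noncomputable def jangSol (ℓ : ℝ) : ℝ := -(5 * ℓ ^ 4 + ℓ ^ 2 + 1) / (ℓ ^ 2 + 1) ^ 3

theorem radius_contDiff : ContDiff ℝ (⊤ : ℕ∞) radius :=
  (by fun_prop : ContDiff ℝ (⊤ : ℕ∞) fun ℓ : ℝ => ℓ ^ 2 + 1).sqrt fun ℓ => by positivity

theorem radius_pos (ℓ : ℝ) : 0 < radius ℓ := Real.sqrt_pos.2 (by positivity)

theorem radius_sq (ℓ : ℝ) : radius ℓ ^ 2 = ℓ ^ 2 + 1 := Real.sq_sqrt (by positivity)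

theorem hasDerivAt_radius (ℓ : ℝ) : HasDerivAt radius (ℓ / radius ℓ) ℓ := by
  have h := ((hasDerivAt_pow 2 ℓ).add_const 1).sqrt (by positivity : ℓ ^ 2 + 1 ≠ 0)
  refine h.congr_deriv ?_
  have := radius_pos ℓ
  simp only [radius] at this ⊢
  field_simp
  norm_num

theorem Hf_radius : Hf radius = fun ℓ => 2 * ℓ / (ℓ ^ 2 + 1) := by
  funext ℓ
  have := radius_pos ℓ
  rw [Hf, (hasDerivAt_radius ℓ).deriv, ← radius_sq]
  field_simp

theorem hasDerivAt_Hf_radius (ℓ : ℝ) :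
    HasDerivAt (Hf radius) ((2 - 2 * ℓ ^ 2) / (ℓ ^ 2 + 1) ^ 2) ℓ := by
  rw [Hf_radius]
  refine (((hasDerivAt_id' ℓ).const_mul 2).fun_div ((hasDerivAt_pow 2 ℓ).add_const 1)
    (by positivity)).congr_deriv ?_
  field_simp
  ring

theorem KR_contDiff : ContDiff ℝ (⊤ : ℕ∞) KR :=
  ContDiff.div (by fun_prop) (by fun_prop) fun ℓ => by positivity

theorem hasDerivAt_KR (ℓ : ℝ) :
    HasDerivAt KR ((45 * ℓ ^ 4 - 34 * ℓ ^ 2 + 1) / (ℓ ^ 2 + 1) ^ 5) ℓ := by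
  refine (((hasDerivAt_id' ℓ).fun_mul (((hasDerivAt_pow 2 ℓ).const_mul 9).const_sub 1)).fun_div
    (((hasDerivAt_pow 2 ℓ).add_const 1).fun_pow 4) (by positivity)).congr_deriv ?_
  field_simp
  ring

theorem jangSol_contDiff : ContDiff ℝ (⊤ : ℕ∞) jangSol :=
  ContDiff.div (by fun_prop) (by fun_prop) fun ℓ => by positivity

theorem hasDerivAt_jangSol (ℓ : ℝ) :
    HasDerivAt jangSol ((10 * ℓ ^ 5 - 16 * ℓ ^ 3 + 4 * ℓ) / (ℓ ^ 2 + 1) ^ 4) ℓ := by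
  have hN := (((hasDerivAt_pow 4 ℓ).const_mul 5).fun_add (hasDerivAt_pow 2 ℓ)).add_const 1
  refine (hN.fun_neg.fun_div (((hasDerivAt_pow 2 ℓ).add_const 1).fun_pow 3)
    (by positivity)).congr_deriv ?_
  field_simp
  ring

theorem isBigO_radius_sq_div_sq_sub_one :
    (fun ℓ => radius ℓ ^ 2 / ℓ ^ 2 - 1) =O[atTop] fun ℓ : ℝ => ℓ⁻¹ := by
  have hQ : natDegree (X ^ 2 : ℝ[X]) = 2 := by compute_degree!
  suffices (fun ℓ => radius ℓ ^ 2 / ℓ ^ 2 - 1) =O[atTop] fun ℓ : ℝ => (ℓ ^ 1)⁻¹ by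
    simpa using this
  refine isBigO_atTop_div_inv_pow 1 (X ^ 2) ?_ (by simp [hQ])
  filter_upwards [eventually_ne_atTop 0] with ℓ hℓ
  simp only [radius_sq, eval_one, eval_pow, eval_X]
  field_simp
  ring

theorem isBigO_Hf_radius_sub :
    (fun ℓ => Hf radius ℓ - 2 / ℓ) =O[atTop] fun ℓ : ℝ => (ℓ ^ 2)⁻¹ := by
  have hQ : natDegree (X * (X ^ 2 + 1) : ℝ[X]) = 3 := by compute_degree!
  refine isBigO_atTop_div_inv_pow (-2) (X * (X ^ 2 + 1)) ?_ (by simp [hQ])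
  filter_upwards [eventually_ne_atTop 0] with ℓ hℓ
  simp only [Hf_radius, eval_neg, eval_ofNat, eval_mul, eval_X, eval_add, eval_pow, eval_one]
  field_simp
  ring

theorem isBigO_deriv_Hf_radius_add :
    (fun ℓ => deriv (Hf radius) ℓ + 2 / ℓ ^ 2) =O[atTop] fun ℓ : ℝ => (ℓ ^ 3)⁻¹ := by
  have hP : natDegree (6 * X ^ 2 + 2 : ℝ[X]) ≤ 2 := by compute_degree
  have hQ : natDegree (X ^ 2 * (X ^ 2 + 1) ^ 2 : ℝ[X]) = 6 := by compute_degree!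
  refine isBigO_atTop_div_inv_pow (6 * X ^ 2 + 2) (X ^ 2 * (X ^ 2 + 1) ^ 2) ?_ (by omega)
  filter_upwards [eventually_ne_atTop 0] with ℓ hℓ
  simp only [(hasDerivAt_Hf_radius ℓ).deriv, eval_add, eval_mul, eval_ofNat, eval_pow, eval_X,
    eval_one]
  field_simp
  ring

theorem isBigO_KR : KR =O[atTop] fun ℓ : ℝ => (ℓ ^ 2)⁻¹ := by
  have hP : natDegree (X * (1 - 9 * X ^ 2) : ℝ[X]) ≤ 3 := by compute_degree
  have hQ : natDegree ((X ^ 2 + 1) ^ 4 : ℝ[X]) = 8 := by compute_degree!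
  exact isBigO_atTop_div_inv_pow (X * (1 - 9 * X ^ 2)) ((X ^ 2 + 1) ^ 4)
    (.of_forall fun ℓ => by simp [KR]) (by omega)

theorem isBigO_deriv_KR : deriv KR =O[atTop] fun ℓ : ℝ => (ℓ ^ 3)⁻¹ := by
  have hP : natDegree (45 * X ^ 4 - 34 * X ^ 2 + 1 : ℝ[X]) ≤ 4 := by compute_degree
  have hQ : natDegree ((X ^ 2 + 1) ^ 5 : ℝ[X]) = 10 := by compute_degree!
  exact isBigO_atTop_div_inv_pow (45 * X ^ 4 - 34 * X ^ 2 + 1) ((X ^ 2 + 1) ^ 5)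
    (.of_forall fun ℓ => by simp [(hasDerivAt_KR ℓ).deriv]) (by omega)

theorem isBigO_trKf_zero_KR : trKf 0 KR =O[atTop] fun ℓ : ℝ => (ℓ ^ 3)⁻¹ := by
  have hP : natDegree (2 * X * (1 - 9 * X ^ 2) : ℝ[X]) ≤ 3 := by compute_degree
  have hQ : natDegree ((X ^ 2 + 1) ^ 4 : ℝ[X]) = 8 := by compute_degree!
  refine isBigO_atTop_div_inv_pow (2 * X * (1 - 9 * X ^ 2)) ((X ^ 2 + 1) ^ 4)
    (.of_forall fun ℓ => ?_) (by omega)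
  simp only [trKf, Pi.zero_apply, KR, zero_add, eval_mul, eval_ofNat, eval_X, eval_sub, eval_one,
    eval_pow, eval_add]
  ring

theorem jangDecay : JangDecay radius 0 KR :=
  ⟨isBigO_radius_sq_div_sq_sub_one, isBigO_Hf_radius_sub, isBigO_deriv_Hf_radius_add,
    isBigO_zero _ _, isBigO_KR, by rw [deriv_zero]; exact isBigO_zero _ _, isBigO_deriv_KR,
    isBigO_trKf_zero_KR⟩

theorem thetaPlus_zero : thetaPlus radius KR 0 = 0 := by
  simp [thetaPlus, Hf_radius, KR]

theorem iteratedDeriv_one_thetaPlus_zero : iteratedDeriv 1 (thetaPlus radius KR) 0 = 4 := by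
  rw [iteratedDeriv_one]
  exact (((hasDerivAt_KR 0).const_mul 2).add (hasDerivAt_Hf_radius 0)).deriv.trans (by norm_num)

theorem thetaPlus_three_quarters_neg : thetaPlus radius KR (3 / 4) < 0 := by
  norm_num [thetaPlus, Hf_radius, KR]

theorem abs_jangSol_lt_one {ℓ : ℝ} (hℓ : ℓ ≠ 0) : |jangSol ℓ| < 1 := by
  have hN : 0 < 5 * ℓ ^ 4 + ℓ ^ 2 + 1 := by positivity
  have hD : 0 < (ℓ ^ 2 + 1) ^ 3 := by positivity
  have hgap : (ℓ ^ 2 + 1) ^ 3 - (5 * ℓ ^ 4 + ℓ ^ 2 + 1) = ℓ ^ 2 * ((ℓ ^ 2 - 1) ^ 2 + 1) := by ring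
  have : 0 < ℓ ^ 2 * ((ℓ ^ 2 - 1) ^ 2 + 1) := by positivity
  rw [jangSol, neg_div, abs_neg, abs_of_pos (div_pos hN hD), div_lt_one hD]
  linarith

theorem tendsto_jangSol_atTop : Tendsto jangSol atTop (𝓝 0) := by
  have hP : natDegree (-(5 * X ^ 4 + X ^ 2 + 1) : ℝ[X]) ≤ 4 := by compute_degree
  have hQ : natDegree ((X ^ 2 + 1) ^ 3 : ℝ[X]) = 6 := by compute_degree!
  refine (isBigO_atTop_div_inv_pow (-(5 * X ^ 4 + X ^ 2 + 1)) ((X ^ 2 + 1) ^ 3) (m := 1)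
    (.of_forall fun ℓ => by simp [jangSol]) (by omega)).trans_tendsto ?_
  simpa using tendsto_inv_atTop_zero

theorem isBlowupSolution_jangSol : IsBlowupSolution radius 0 KR 0 jangSol := by
  refine ⟨jangSol_contDiff.contDiffOn, fun ℓ _ => (hasDerivAt_jangSol ℓ).congr_deriv ?_,
    by norm_num [jangSol], fun ℓ hℓ => abs_jangSol_lt_one hℓ.ne', tendsto_jangSol_atTop⟩
  simp only [Hf_radius, jangSol, KR, trKf, Pi.zero_apply]
  field_simp
  ring

end JangExample

/-- Corollary 1: there exist asymptotically flat spherically symmetric data and a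
finitely stable MOTS `ℓ**` lying inside a strictly outer trapped surface `ℓ'`, for
which a blow-up solution exists. -/
theorem exists_blowup_for_mots_inside_outer_trapped :
    ∃ (ℓ₀ : ℝ) (R Kl KR : ℝ → ℝ) (ℓss ℓ' : ℝ),
      ContDiff ℝ (⊤ : ℕ∞) R ∧ ContDiff ℝ (⊤ : ℕ∞) Kl ∧ ContDiff ℝ (⊤ : ℕ∞) KR ∧
      (∀ ℓ ∈ Set.Ici ℓ₀, 0 < R ℓ) ∧
      JangDecay R Kl KR ∧
      ℓ₀ ≤ ℓss ∧ ℓss < ℓ' ∧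
      thetaPlus R KR ℓss = 0 ∧
      (∃ m, 1 ≤ m ∧ 0 < iteratedDeriv m (thetaPlus R KR) ℓss) ∧
      thetaPlus R KR ℓ' < 0 ∧
      ∃ k : ℝ → ℝ, IsBlowupSolution R Kl KR ℓss k := by
  open JangExample in
  exact ⟨0, radius, 0, KR, 0, 3 / 4, radius_contDiff, contDiff_zero_fun, KR_contDiff,
    fun ℓ _ => radius_pos ℓ, jangDecay, le_rfl, by norm_num, thetaPlus_zero,
    ⟨1, le_rfl, by norm_num [iteratedDeriv_one_thetaPlus_zero]⟩, thetaPlus_three_quarters_neg,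
    jangSol, isBlowupSolution_jangSol⟩
end

section
/- (Forcing lemma used in Corollary 2.) Let R, K_ℓ, K_R be smooth with R > 0 on [a,b] (a < b), and set H = 2R'/R, θ⁺ = 2K_R + H, trK = K_ℓ + 2K_R. Suppose there are constants M ≥ 0 and τ > 0 with |K_ℓ(ℓ)| ≤ M, |H(ℓ)| ≤ M, and θ⁺(ℓ) ≤ −τ for all ℓ ∈ [a,b], and suppose τ > 3M + 2/(b − a). Then any C¹ solution k of ∂_ℓ k = −K_ℓ k² − H k + trK on [a,b] with k(a) ≤ 1 satisfies k(ℓ') < −1 for some ℓ' ∈ (a,b]. -/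
/-!
Compare `k` with the line `B ℓ = 1 + c (ℓ - a)` of slope `c`, chosen with `3M - τ < c < -2/(b - a)`.
If `k` stayed `≥ -1` on `(a,b]`, then wherever `k` touches `B` it lies in `[-1,1]`, where the Jang
equation, written as `k' = K_ℓ (1 - k²) - H (1 + k) + θ⁺`, gives `k' ≤ M + 2M - τ < c`. Hence
`k ≤ B` on `[a,b]`, and `B b < -1`.
-/

open Filter Asymptotics Set Topology

theorem exists_mem_Ioc_lt_neg_one_of_deriv_le {f f' : ℝ → ℝ} {a b σ : ℝ} (hab : a < b)
    (hf : ∀ x ∈ Icc a b, HasDerivAt f (f' x) x) (ha : f a ≤ 1) (hσ : σ < -2 / (b - a))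
    (hf' : ∀ x ∈ Ico a b, |f x| ≤ 1 → f' x ≤ σ) :
    ∃ x ∈ Ioc a b, f x < -1 := by
  by_contra! hge
  obtain ⟨c, hσc, hc⟩ := exists_between hσ
  have hba : 0 < b - a := sub_pos.mpr hab
  replace hc : c * (b - a) < -2 := (lt_div_iff₀ hba).mp hc
  have hcneg : c < 0 := by nlinarith
  have hB : ∀ x, HasDerivAt (fun x => 1 + c * (x - a)) c x := fun x => by
    simpa using (((hasDerivAt_id x).sub_const a).const_mul c).const_add 1
  have hle : ∀ x ∈ Icc a b, f x ≤ 1 + c * (x - a) :=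
    image_le_of_deriv_right_lt_deriv_boundary
      (fun x hx => (hf x hx).continuousAt.continuousWithinAt)
      (fun x hx => (hf x (Ico_subset_Icc_self hx)).hasDerivWithinAt) (by simpa using ha) hB
      fun x hx hfx => by
        have hlow : -1 ≤ f x := by
          rcases hx.1.eq_or_lt with rfl | hax
          · simp [hfx]
          · exact hge x ⟨hax, hx.2.le⟩
        have hup : f x ≤ 1 := by nlinarith [hx.1]
        exact (hf' x hx (abs_le.mpr ⟨hlow, hup⟩)).trans_lt hσc
  have hb := hle b (right_mem_Icc.mpr hab.le)
  linarith [hge b (right_mem_Ioc.mpr hab)]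

theorem neg_mul_sq_sub_Hf_mul_add_trKf_eq (R Kl KR : ℝ → ℝ) (ℓ x : ℝ) :
    -(Kl ℓ) * x ^ 2 - Hf R ℓ * x + trKf Kl KR ℓ =
      Kl ℓ * (1 - x ^ 2) - Hf R ℓ * (1 + x) + thetaPlus R KR ℓ := by
  simp only [trKf, thetaPlus]
  ring

theorem mul_one_sub_sq_sub_mul_one_add_add_le {K H θ x M τ : ℝ} (hx : |x| ≤ 1)
    (hK : |K| ≤ M) (hH : |H| ≤ M) (hθ : θ ≤ -τ) :
    K * (1 - x ^ 2) - H * (1 + x) + θ ≤ 3 * M - τ := by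
  obtain ⟨hx₁, hx₂⟩ := abs_le.mp hx
  obtain ⟨hK₁, hK₂⟩ := abs_le.mp hK
  obtain ⟨hH₁, hH₂⟩ := abs_le.mp hH
  have hM : 0 ≤ M := (abs_nonneg K).trans hK
  have hKterm : K * (1 - x ^ 2) ≤ M := by
    nlinarith [mul_nonneg (sub_nonneg.mpr hK₂) (by nlinarith : (0 : ℝ) ≤ 1 - x ^ 2), sq_nonneg x]
  have hHterm : -(H * (1 + x)) ≤ 2 * M := by
    nlinarith [mul_nonneg (neg_le_iff_add_nonneg.mp hH₁) (neg_le_iff_add_nonneg'.mp hx₁)]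
  linarith

theorem jang_forced_below_minus_one_general (a b : ℝ) (hab : a < b) (R Kl KR k : ℝ → ℝ)
    (M τ : ℝ)
    (hKlbd : ∀ ℓ ∈ Set.Icc a b, |Kl ℓ| ≤ M)
    (hHbd : ∀ ℓ ∈ Set.Icc a b, |Hf R ℓ| ≤ M)
    (hθ : ∀ ℓ ∈ Set.Icc a b, thetaPlus R KR ℓ ≤ -τ)
    (hτbig : 3 * M + 2 / (b - a) < τ)
    (hode : ∀ ℓ ∈ Set.Icc a b,
      HasDerivAt k (-(Kl ℓ) * k ℓ ^ 2 - Hf R ℓ * k ℓ + trKf Kl KR ℓ) ℓ)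
    (hka : k a ≤ 1) :
    ∃ ℓ' ∈ Set.Ioc a b, k ℓ' < -1 := by
  refine exists_mem_Ioc_lt_neg_one_of_deriv_le hab hode hka (σ := 3 * M - τ)
    (by rw [neg_div]; linarith)
    fun ℓ hℓ hkℓ => ?_
  have hℓ' : ℓ ∈ Icc a b := Ico_subset_Icc_self hℓ
  rw [neg_mul_sq_sub_Hf_mul_add_trKf_eq]
  exact mul_one_sub_sq_sub_mul_one_add_add_le hkℓ (hKlbd ℓ hℓ') (hHbd ℓ hℓ') (hθ ℓ hℓ')

/-- Forcing lemma used in Corollary 2: if `|K_ℓ| ≤ M`, `|H| ≤ M` and `θ⁺ ≤ −τ` on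
`[a,b]` with `τ > 3M + 2/(b − a)`, then any `C¹` solution of the reduced Jang
equation on `[a,b]` with `k(a) ≤ 1` drops strictly below `−1` somewhere in `(a,b]`. -/
theorem jang_forced_below_minus_one (a b : ℝ) (hab : a < b) (R Kl KR k : ℝ → ℝ)
    (hR : ContDiffOn ℝ (⊤ : ℕ∞) R (Set.Icc a b))
    (hKl : ContDiffOn ℝ (⊤ : ℕ∞) Kl (Set.Icc a b))
    (hKR : ContDiffOn ℝ (⊤ : ℕ∞) KR (Set.Icc a b))
    (hRpos : ∀ ℓ ∈ Set.Icc a b, 0 < R ℓ)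
    (M τ : ℝ) (hM : 0 ≤ M) (hτ : 0 < τ)
    (hKlbd : ∀ ℓ ∈ Set.Icc a b, |Kl ℓ| ≤ M)
    (hHbd : ∀ ℓ ∈ Set.Icc a b, |Hf R ℓ| ≤ M)
    (hθ : ∀ ℓ ∈ Set.Icc a b, thetaPlus R KR ℓ ≤ -τ)
    (hτbig : 3 * M + 2 / (b - a) < τ)
    (hode : ∀ ℓ ∈ Set.Icc a b,
      HasDerivAt k (-(Kl ℓ) * k ℓ ^ 2 - Hf R ℓ * k ℓ + trKf Kl KR ℓ) ℓ)
    (hka : k a ≤ 1) :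
    ∃ ℓ' ∈ Set.Ioc a b, k ℓ' < -1 :=
  jang_forced_below_minus_one_general a b hab R Kl KR k M τ hKlbd hHbd hθ hτbig hode hka
end

section
/- Let R, b be smooth functions on [L,∞) with R > 0, let c ∈ ℝ, and define K_R(ℓ) = R(ℓ)⁻³ · ( c + ∫_L^ℓ R'(s) R(s)² b(s) ds ), K_ℓ = b − 2K_R, and H = 2R'/R. Then 2H(K_ℓ − K_R) − 4∂_ℓK_R ≡ 0 on [L,∞). (In particular, for the data given by this ansatz, the right-hand side of the spherically symmetric dominant energy condition inequality vanishes identically.) -/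
/-!
Differentiating `R³ K_R = c + ∫_L^ℓ R' R² b` gives `R³ K_R' + 3 R² R' K_R = R' R² b`, i.e.
`K_R' = (R'/R) (b − 3 K_R)`. Since `K_ℓ − K_R = b − 3 K_R` and `H = 2R'/R`, the combination is
`4 (R'/R) (b − 3 K_R) − 4 K_R' = 0`.
-/

open Filter Asymptotics Set Topology

theorem HasDerivAt.inv_pow_succ_mul {R N : ℝ → ℝ} {r b x : ℝ} (n : ℕ)
    (hR : HasDerivAt R r x) (hN : HasDerivAt N (r * R x ^ n * b) x) (hx : R x ≠ 0) :
    HasDerivAt (fun y => (R y ^ (n + 1))⁻¹ * N y)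
      (r / R x * (b - (n + 1) * ((R x ^ (n + 1))⁻¹ * N x))) x := by
  refine (((hR.fun_pow (n + 1)).inv (pow_ne_zero _ hx)).fun_mul hN).congr_deriv ?_
  simp only [Pi.inv_apply, Nat.add_sub_cancel, Nat.cast_succ]
  field_simp
  ring

/-- For the integral ansatz `K_R(ℓ) = R(ℓ)⁻³ (c + ∫_L^ℓ R' R² b)`, `K_ℓ = b − 2K_R`,
the momentum-density combination `2H(K_ℓ − K_R) − 4∂_ℓK_R` vanishes identically on
`[L,∞)`. -/
theorem momentum_density_vanishes_for_ansatz (L c : ℝ) (R b : ℝ → ℝ)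
    (hR : ContDiff ℝ (⊤ : ℕ∞) R)
    (hb : ContDiff ℝ (⊤ : ℕ∞) b)
    (hRpos : ∀ ℓ ∈ Set.Ici L, 0 < R ℓ)
    (KR Kl : ℝ → ℝ)
    (hKRdef : KR = fun ℓ =>
      (R ℓ ^ 3)⁻¹ * (c + ∫ s in L..ℓ, deriv R s * R s ^ 2 * b s))
    (hKldef : Kl = fun ℓ => b ℓ - 2 * KR ℓ) :
    ∀ ℓ ∈ Set.Ici L, 2 * Hf R ℓ * (Kl ℓ - KR ℓ) - 4 * deriv KR ℓ = 0 := by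
  intro ℓ hℓ
  have hsource : Continuous fun s => deriv R s * R s ^ 2 * b s :=
    ((hR.continuous_deriv (by norm_num)).mul (hR.continuous.pow 2)).mul hb.continuous
  have hKR : HasDerivAt KR (deriv R ℓ / R ℓ * (b ℓ - 3 * KR ℓ)) ℓ := by
    subst hKRdef
    convert HasDerivAt.inv_pow_succ_mul 2 (hR.differentiable (by norm_num) ℓ).hasDerivAt
      ((hsource.integral_hasStrictDerivAt L ℓ).hasDerivAt.const_add c) (hRpos ℓ hℓ).ne' using 1
    norm_num
  rw [hKR.deriv, hKldef, Hf]
  ring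
end
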